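/- arXiv:1712.01933 — 3 statements merged into one kernel-verified Lean document; each statement's English description precedes it below -/
import Mathlib

section
/- There exist two-dimensional integral polytopes P₁, P₂, P₃, P₄ (polytopes all of whose vertices have integer coordinates, each given by a minimal representation Bx ≤ d in which every inequality defines a facet) such that: P₁ admits a circuit walk that is not integral; every circuit walk in P₂ is integral, but P₂ admits a circuit walk that is not a vertex walk; every circuit walk in P₃ is a vertex walk, but P₃ admits a circuit walk that is not an edge walk; and every circuit walk in P₄ is an edge walk. Hence the four levels GCW ⊇ ICW ⊇ VCW ⊇ ECW of the circuit-walk hierarchy of integral polyhedra are pairwise distinct. -/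
/-!
STATEMENT 0: There exist two-dimensional integral polytopes P₁, P₂, P₃, P₄ (each given by a
minimal representation) such that: P₁ has a non-integral circuit walk; all circuit walks of P₂
are integral but some is not a vertex walk; all circuit walks of P₃ are vertex walks but some
is not an edge walk; all circuit walks of P₄ are edge walks.  Hence the four levels
GCW ⊇ ICW ⊇ VCW ⊇ ECW of the circuit-walk hierarchy are pairwise distinct.
-/

open Matrix

/-- The polyhedron `{x ∈ ℝⁿ : B x ≤ d}`. -/
def PolyB {m n : ℕ} (B : Matrix (Fin m) (Fin n) ℝ) (d : Fin m → ℝ) : Set (Fin n → ℝ) :=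
  {x | ∀ i, B.mulVec x i ≤ d i}

/-- A real vector with integer components whose greatest common divisor is 1. -/
def IsCoprimeIntegerVec {n : ℕ} (g : Fin n → ℝ) : Prop :=
  ∃ gz : Fin n → ℤ, (∀ i, g i = (gz i : ℝ)) ∧ Finset.univ.gcd gz = 1

/-- `g` is a circuit of the system `B x ≤ d`: `g ≠ 0` has coprime integer components and `B g`
is support-minimal over `{B x : x ≠ 0}`. -/
def IsCircuitB {m n : ℕ} (B : Matrix (Fin m) (Fin n) ℝ) (g : Fin n → ℝ) : Prop :=
  g ≠ 0 ∧ IsCoprimeIntegerVec g ∧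
    ¬ ∃ y : Fin n → ℝ, y ≠ 0 ∧ {i | B.mulVec y i ≠ 0} ⊂ {i | B.mulVec g i ≠ 0}

/-- A circuit walk: a sequence of points of `P` starting and ending at vertices,
each step a maximal step along a circuit direction. -/
def IsCircuitWalk {n : ℕ} (P : Set (Fin n → ℝ)) (Circ : (Fin n → ℝ) → Prop)
    {k : ℕ} (y : Fin (k + 1) → Fin n → ℝ) : Prop :=
  y 0 ∈ P.extremePoints ℝ ∧ y (Fin.last k) ∈ P.extremePoints ℝ ∧
  ∀ i : Fin k, y i.castSucc ∈ P ∧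
    ∃ (g : Fin n → ℝ) (α : ℝ), Circ g ∧ 0 < α ∧
      y i.succ = y i.castSucc + α • g ∧
      ∀ β : ℝ, α < β → y i.castSucc + β • g ∉ P

/-- A circuit walk is integral if all of its points have integer components. -/
def IsIntegralWalk {n k : ℕ} (y : Fin (k + 1) → Fin n → ℝ) : Prop :=
  ∀ i j, ∃ z : ℤ, y i j = (z : ℝ)

/-- A circuit walk is a vertex walk if all of its points are vertices of `P`. -/
def IsVertexWalk {n : ℕ} (P : Set (Fin n → ℝ)) {k : ℕ} (y : Fin (k + 1) → Fin n → ℝ) : Prop :=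
  ∀ i, y i ∈ P.extremePoints ℝ

/-- A circuit walk is an edge walk if each of its segments is a one-dimensional face
(an edge) of `P`. -/
def IsEdgeWalk {n : ℕ} (P : Set (Fin n → ℝ)) {k : ℕ} (y : Fin (k + 1) → Fin n → ℝ) : Prop :=
  ∀ i : Fin k, y i.castSucc ≠ y i.succ ∧
    IsExtreme ℝ P (segment ℝ (y i.castSucc) (y i.succ))

/-- A face of a convex set: a convex extreme subset. -/
def IsFaceOf {n : ℕ} (P F : Set (Fin n → ℝ)) : Prop :=
  IsExtreme ℝ P F ∧ Convex ℝ F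

/-- A facet of an `n`-dimensional polyhedron `P ⊆ ℝⁿ`: an `(n-1)`-dimensional face. -/
def IsFacetOf {n : ℕ} (P F : Set (Fin n → ℝ)) : Prop :=
  IsFaceOf P F ∧ F.Nonempty ∧ Module.finrank ℝ (vectorSpan ℝ F) = n - 1

/-- A polytope in `ℝⁿ` is simple if each of its vertices lies on exactly `n` facets. -/
def IsSimplePoly {n : ℕ} (P : Set (Fin n → ℝ)) : Prop :=
  ∀ v ∈ P.extremePoints ℝ, {F : Set (Fin n → ℝ) | IsFacetOf P F ∧ v ∈ F}.ncard = n

/-- The representation `B x ≤ d` is minimal if every inequality defines a facet. -/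
def IsMinimalRep {m n : ℕ} (B : Matrix (Fin m) (Fin n) ℝ) (d : Fin m → ℝ) : Prop :=
  ∀ i : Fin m, IsFacetOf (PolyB B d) {x ∈ PolyB B d | B.mulVec x i = d i}

/-- The inner cone of a point `u` with respect to a set `F`: all directions `g` such that a
small step from `u` along `g` stays in `F`. -/
def innerConeIn {n : ℕ} (F : Set (Fin n → ℝ)) (u : Fin n → ℝ) : Set (Fin n → ℝ) :=
  {g | ∃ ε : ℝ, 0 < ε ∧ u + ε • g ∈ F}

/-- The inclusion-minimal face of `P` containing both `u` and `v`. -/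
def minFace {n : ℕ} (P : Set (Fin n → ℝ)) (u v : Fin n → ℝ) : Set (Fin n → ℝ) :=
  ⋂₀ {F | IsFaceOf P F ∧ u ∈ F ∧ v ∈ F}

/-- The symmetric inner cone condition: for all pairs of vertices `u`, `v`, the inner cones of
`u` and `v` with respect to the minimal face containing both are opposite. -/
def SymmetricInnerCone {n : ℕ} (P : Set (Fin n → ℝ)) : Prop :=
  ∀ u ∈ P.extremePoints ℝ, ∀ v ∈ P.extremePoints ℝ,
    innerConeIn (minFace P u v) u = -innerConeIn (minFace P u v) v

/-- A `d`-parallelotope (of dimension `d`) inside `ℝ^N`. -/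
def IsParallelotopeDim (N d : ℕ) (F : Set (Fin N → ℝ)) : Prop :=
  ∃ (t : Fin N → ℝ) (w : Fin d → Fin N → ℝ), LinearIndependent ℝ w ∧
    F = (fun lam : Fin d → ℝ => t + ∑ i, lam i • w i) ''
      {lam | ∀ i, 0 ≤ lam i ∧ lam i ≤ 1}

/-- An `(n,d)`-parallelotope: an `n`-dimensional polytope with `n + d` facets satisfying the
symmetric inner cone condition, in which every vertex belongs to a `d`-parallelotope face. -/
def IsNdParallelotope (N d : ℕ) (P : Set (Fin N → ℝ)) : Prop :=
  1 ≤ d ∧ d ≤ N ∧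
  Convex ℝ P ∧ IsCompact P ∧ P.Nonempty ∧ affineSpan ℝ P = ⊤ ∧
  {F : Set (Fin N → ℝ) | IsFacetOf P F}.ncard = N + d ∧
  SymmetricInnerCone P ∧
  ∀ v ∈ P.extremePoints ℝ, ∃ F, IsFaceOf P F ∧ v ∈ F ∧ IsParallelotopeDim N d F

/-- A two-dimensional integral polytope in `ℝ²` given by a minimal representation:
bounded, nonempty, full-dimensional (i.e. two-dimensional), all vertices integral,
and every inequality defines a facet. -/
def IsIntegral2DPolytope {m : ℕ} (B : Matrix (Fin m) (Fin 2) ℝ) (d : Fin m → ℝ) : Prop :=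
  Bornology.IsBounded (PolyB B d) ∧ (PolyB B d).Nonempty ∧
  affineSpan ℝ (PolyB B d) = ⊤ ∧
  (∀ v ∈ (PolyB B d).extremePoints ℝ, ∀ j, ∃ z : ℤ, v j = (z : ℝ)) ∧
  IsMinimalRep B d


lemma comb_eq {p q c a b : ℝ} (hp : p ≤ c) (hq : q ≤ c) (ha : 0 < a) (hb : 0 < b)
    (hab : a + b = 1) (h : a * p + b * q = c) : p = c ∧ q = c := by
  have hc : a * c + b * c = c := by linear_combination c * hab
  have h1 : b * q ≤ b * c := mul_le_mul_of_nonneg_left hq hb.le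
  have h3 : a * p ≤ a * c := mul_le_mul_of_nonneg_left hp ha.le
  have h4 : b * c ≤ b * q := by linarith
  have h2 : a * c ≤ a * p := by linarith
  exact ⟨le_antisymm hp (le_of_mul_le_mul_left h2 ha),
         le_antisymm hq (le_of_mul_le_mul_left h4 hb)⟩

lemma convex_PolyB {m n : ℕ} (B : Matrix (Fin m) (Fin n) ℝ) (d : Fin m → ℝ) :
    Convex ℝ (PolyB B d) := by
  intro x hx y hy a b ha hb hab i
  have hx' := hx i; have hy' := hy i
  have h : B.mulVec (a • x + b • y) i = a * B.mulVec x i + b * B.mulVec y i := by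
    simp [Matrix.mulVec_add, Matrix.mulVec_smul]
  have hc : a * d i + b * d i = d i := by linear_combination (d i) * hab
  have := mul_le_mul_of_nonneg_left hx' ha
  have := mul_le_mul_of_nonneg_left hy' hb
  show B.mulVec _ i ≤ d i
  rw [h]; linarith

lemma isExtreme_facet {m n : ℕ} (B : Matrix (Fin m) (Fin n) ℝ) (d : Fin m → ℝ) (i : Fin m) :
    IsExtreme ℝ (PolyB B d) {x ∈ PolyB B d | B.mulVec x i = d i} := by
  constructor
  · exact fun x hx => hx.1
  · rintro x1 h1 x2 h2 x ⟨hxP, hxi⟩ hseg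
    obtain ⟨a, b, ha, hb, hab, hsum⟩ := hseg
    have key : a * B.mulVec x1 i + b * B.mulVec x2 i = d i := by
      rw [← hxi, ← hsum]; simp [Matrix.mulVec_add, Matrix.mulVec_smul]
    obtain ⟨e1, e2⟩ := comb_eq (h1 i) (h2 i) ha hb hab key
    exact ⟨h1, e1⟩

lemma vertex_extreme {m n : ℕ} (B : Matrix (Fin m) (Fin n) ℝ) (d : Fin m → ℝ)
    (v : Fin n → ℝ) (hv : v ∈ PolyB B d) (i j : Fin m)
    (hi : B.mulVec v i = d i) (hj : B.mulVec v j = d j)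
    (huniq : ∀ x ∈ PolyB B d, B.mulVec x i = d i → B.mulVec x j = d j → x = v) :
    v ∈ (PolyB B d).extremePoints ℝ := by
  rw [mem_extremePoints]
  refine ⟨hv, ?_⟩
  intro x1 h1 x2 h2 hseg
  obtain ⟨a, b, ha, hb, hab, hsum⟩ := hseg
  have key : ∀ r, a * B.mulVec x1 r + b * B.mulVec x2 r = B.mulVec v r := by
    intro r; rw [← hsum]; simp [Matrix.mulVec_add, Matrix.mulVec_smul]
  obtain ⟨e1i, e2i⟩ := comb_eq (h1 i) (h2 i) ha hb hab (by rw [key i, hi])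
  obtain ⟨e1j, e2j⟩ := comb_eq (h1 j) (h2 j) ha hb hab (by rw [key j, hj])
  exact ⟨huniq x1 h1 e1i e1j, huniq x2 h2 e2i e2j⟩

lemma not_extreme_of_dir {n : ℕ} {P : Set (Fin n → ℝ)} {x u : Fin n → ℝ} (hu : u ≠ 0) {ε : ℝ}
    (hε : 0 < ε) (h1 : x + ε • u ∈ P) (h2 : x - ε • u ∈ P) : x ∉ P.extremePoints ℝ := by
  rw [mem_extremePoints]
  rintro ⟨-, h⟩
  have hseg : x ∈ openSegment ℝ (x - ε • u) (x + ε • u) := by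
    refine ⟨1/2, 1/2, by norm_num, by norm_num, by norm_num, ?_⟩
    module
  have h' : x - ε • u = x := (h _ h2 _ h1 hseg).1
  have : ε • u = 0 := sub_eq_self.mp h'
  exact hu (smul_eq_zero.mp this |>.resolve_left (by positivity))

lemma finrank_vectorSpan_segment {n : ℕ} {a b : Fin n → ℝ} (h : a ≠ b) :
    Module.finrank ℝ (vectorSpan ℝ (segment ℝ a b)) = 1 := by
  have h1 : vectorSpan ℝ (segment ℝ a b) = vectorSpan ℝ {a, b} := by
    apply le_antisymm
    · have hsub : segment ℝ a b ⊆ (affineSpan ℝ ({a,b} : Set (Fin n → ℝ)) : Set _) :=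
        (AffineSubspace.convex _).segment_subset
          (subset_affineSpan ℝ _ (by simp)) (subset_affineSpan ℝ _ (by simp))
      calc vectorSpan ℝ (segment ℝ a b)
          ≤ vectorSpan ℝ ((affineSpan ℝ ({a,b} : Set (Fin n → ℝ)) : Set _)) :=
            vectorSpan_mono ℝ hsub
        _ = vectorSpan ℝ {a,b} := by
            rw [← direction_affineSpan, AffineSubspace.affineSpan_coe, direction_affineSpan]
    · exact vectorSpan_mono ℝ (by
        intro x hx
        rcases hx with rfl | hx
        · exact left_mem_segment ℝ _ _
        · rcases hx with rfl; exact right_mem_segment ℝ _ _)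
  rw [h1, vectorSpan_pair]
  exact finrank_span_singleton (by simpa [vsub_eq_sub, sub_eq_zero] using h)

lemma affineSpan_top_of_pts {P : Set (Fin 2 → ℝ)}
    (h0 : ![(0:ℝ),0] ∈ P) (h1 : ![(1:ℝ),0] ∈ P) (h2 : ![(0:ℝ),1] ∈ P) :
    affineSpan ℝ P = ⊤ := by
  have hne : (affineSpan ℝ P : Set (Fin 2 → ℝ)).Nonempty :=
    ⟨_, subset_affineSpan ℝ _ h0⟩
  rw [← AffineSubspace.direction_eq_top_iff_of_nonempty hne, direction_affineSpan]
  rw [eq_top_iff]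
  intro v _
  have e1 : ![(1:ℝ),0] -ᵥ ![(0:ℝ),0] ∈ vectorSpan ℝ P := vsub_mem_vectorSpan ℝ h1 h0
  have e2 : ![(0:ℝ),1] -ᵥ ![(0:ℝ),0] ∈ vectorSpan ℝ P := vsub_mem_vectorSpan ℝ h2 h0
  have hv : v = v 0 • (![(1:ℝ),0] -ᵥ ![(0:ℝ),0]) + v 1 • (![(0:ℝ),1] -ᵥ ![(0:ℝ),0]) := by
    funext i; fin_cases i <;> simp [vsub_eq_sub]
  rw [hv]
  exact Submodule.add_mem _ (Submodule.smul_mem _ _ e1) (Submodule.smul_mem _ _ e2)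

lemma add_smul_pt (a b c d α : ℝ) : ![a,b] + α • ![c,d] = ![a + α*c, b + α*d] := by
  funext i; fin_cases i <;> simp [mul_comm]

lemma sub_smul_pt (a b c d α : ℝ) : ![a,b] - α • ![c,d] = ![a - α*c, b - α*d] := by
  funext i; fin_cases i <;> simp [mul_comm]

lemma pt_eq_iff {a b a' b' : ℝ} : ![a,b] = ![a',b'] ↔ a = a' ∧ b = b' := by
  constructor
  · intro h; exact ⟨congrFun h 0, congrFun h 1⟩
  · rintro ⟨rfl, rfl⟩; rfl

lemma pt_ne_zero_left {a b : ℝ} (h : a ≠ 0) : ![a,b] ≠ 0 := by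
  intro hh; exact h (congrFun hh 0)

lemma pt_ne_zero_right {a b : ℝ} (h : b ≠ 0) : ![a,b] ≠ 0 := by
  intro hh; exact h (congrFun hh 1)

lemma unit_of_dvd_all (gz : Fin 2 → ℤ) (h : Finset.univ.gcd gz = 1) (c : ℤ)
    (hc : ∀ i, c ∣ gz i) : c = 1 ∨ c = -1 := by
  have : c ∣ 1 := h ▸ Finset.dvd_gcd (fun i _ => hc i)
  exact Int.isUnit_iff.mp (isUnit_of_dvd_one this)

lemma walk_mem_P {n k : ℕ} {P : Set (Fin n → ℝ)} {Circ : (Fin n → ℝ) → Prop}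
    {y : Fin (k+1) → Fin n → ℝ} (hw : IsCircuitWalk P Circ y) : ∀ j, y j ∈ P := by
  intro j
  by_cases h : j = Fin.last k
  · subst h; exact hw.2.1.1
  · obtain ⟨i, hi⟩ := Fin.exists_castSucc_eq.mpr h
    rw [← hi]
    exact (hw.2.2 i).1

lemma walk_induct {n k : ℕ} {P S : Set (Fin n → ℝ)} {Circ : (Fin n → ℝ) → Prop}
    {y : Fin (k+1) → Fin n → ℝ} (hw : IsCircuitWalk P Circ y)
    (hS : P.extremePoints ℝ ⊆ S)
    (hstep : ∀ x ∈ S, ∀ (g : Fin n → ℝ) (α : ℝ), Circ g → 0 < α → x + α • g ∈ P →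
      (∀ β, α < β → x + β • g ∉ P) → x + α • g ∈ S) :
    ∀ j, y j ∈ S := by
  intro j
  induction j using Fin.induction with
  | zero => exact hS hw.1
  | succ i ih =>
    obtain ⟨hmem, g, α, hg, hα, heq, hmax⟩ := hw.2.2 i
    have hin : y i.succ ∈ P := walk_mem_P hw i.succ
    rw [heq] at hin ⊢
    exact hstep _ ih g α hg hα hin hmax

/-! ### P₄ : the triangle with vertices (0,0), (1,0), (0,1) -/

def B4 : Matrix (Fin 3) (Fin 2) ℝ := !![-1,0; 0,-1; 1,1]
def d4 : Fin 3 → ℝ := ![0,0,1]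

lemma row4 (x : Fin 2 → ℝ) : B4.mulVec x 0 = -x 0 ∧ B4.mulVec x 1 = -x 1 ∧
    B4.mulVec x 2 = x 0 + x 1 := by
  refine ⟨?_, ?_, ?_⟩ <;> simp [B4, Matrix.mulVec, dotProduct, Fin.sum_univ_succ]

lemma memP4 (x : Fin 2 → ℝ) : x ∈ PolyB B4 d4 ↔ 0 ≤ x 0 ∧ 0 ≤ x 1 ∧ x 0 + x 1 ≤ 1 := by
  simp [PolyB, B4, d4, Matrix.mulVec, dotProduct, Fin.forall_fin_succ, Fin.sum_univ_succ]

lemma vO4 : ![(0:ℝ),0] ∈ (PolyB B4 d4).extremePoints ℝ := by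
  refine vertex_extreme B4 d4 _ ((memP4 _).2 (by norm_num)) 0 1 ?_ ?_ ?_
  · rw [(row4 _).1]; norm_num [d4]
  · rw [(row4 _).2.1]; norm_num [d4]
  · intro x hx h0 h1
    rw [(row4 x).1] at h0; rw [(row4 x).2.1] at h1
    simp [d4] at h0 h1
    funext i; fin_cases i <;> simp [h0, h1]

lemma vX4 : ![(1:ℝ),0] ∈ (PolyB B4 d4).extremePoints ℝ := by
  refine vertex_extreme B4 d4 _ ((memP4 _).2 (by norm_num)) 1 2 ?_ ?_ ?_
  · rw [(row4 _).2.1]; norm_num [d4]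
  · rw [(row4 _).2.2]; norm_num [d4, Matrix.cons_val_two, Matrix.cons_val_three]
  · intro x hx h0 h1
    rw [(row4 x).2.1] at h0; rw [(row4 x).2.2] at h1
    simp [d4] at h0 h1
    funext i; fin_cases i <;> simp [h0] <;> linarith

lemma vY4 : ![(0:ℝ),1] ∈ (PolyB B4 d4).extremePoints ℝ := by
  refine vertex_extreme B4 d4 _ ((memP4 _).2 (by norm_num)) 0 2 ?_ ?_ ?_
  · rw [(row4 _).1]; norm_num [d4]
  · rw [(row4 _).2.2]; norm_num [d4, Matrix.cons_val_two, Matrix.cons_val_three]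
  · intro x hx h0 h1
    rw [(row4 x).1] at h0; rw [(row4 x).2.2] at h1
    simp [d4] at h0 h1
    funext i; fin_cases i <;> simp [h0] <;> linarith

lemma ext4 (x : Fin 2 → ℝ) (hx : x ∈ (PolyB B4 d4).extremePoints ℝ) :
    x = ![0,0] ∨ x = ![1,0] ∨ x = ![0,1] := by
  obtain ⟨h0, h1, h2⟩ := (memP4 x).1 hx.1
  have hxv : x = ![x 0, x 1] := by funext i; fin_cases i <;> rfl
  rcases eq_or_lt_of_le h0 with ha | ha
  · rcases eq_or_lt_of_le h1 with hb | hb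
    · left; funext i; fin_cases i <;> simp [← ha, ← hb]
    · rcases eq_or_lt_of_le h2 with hc | hc
      · right; right; funext i; fin_cases i <;> simp <;> linarith
      · exfalso
        set ε := min (x 1) (1 - x 0 - x 1) with hεdef
        have hε1 : ε ≤ x 1 := min_le_left _ _
        have hε2 : ε ≤ 1 - x 0 - x 1 := min_le_right _ _
        have hε : 0 < ε := lt_min hb (by linarith)
        refine not_extreme_of_dir (u := ![0,1]) (pt_ne_zero_right one_ne_zero) hε ?_ ?_ hx
        · rw [hxv, add_smul_pt, memP4]; norm_num <;> (and_intros <;> linarith)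
        · rw [hxv, sub_smul_pt, memP4]; norm_num <;> (and_intros <;> linarith)
  · rcases eq_or_lt_of_le h1 with hb | hb
    · rcases eq_or_lt_of_le h2 with hc | hc
      · right; left; funext i; fin_cases i <;> simp <;> linarith
      · exfalso
        set ε := min (x 0) (1 - x 0 - x 1) with hεdef
        have hε1 : ε ≤ x 0 := min_le_left _ _
        have hε2 : ε ≤ 1 - x 0 - x 1 := min_le_right _ _
        have hε : 0 < ε := lt_min ha (by linarith)
        refine not_extreme_of_dir (u := ![1,0]) (pt_ne_zero_left one_ne_zero) hε ?_ ?_ hx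
        · rw [hxv, add_smul_pt, memP4]; norm_num <;> (and_intros <;> linarith)
        · rw [hxv, sub_smul_pt, memP4]; norm_num <;> (and_intros <;> linarith)
    · rcases eq_or_lt_of_le h2 with hc | hc
      · exfalso
        set ε := min (x 0) (x 1) with hεdef
        have hε1 : ε ≤ x 0 := min_le_left _ _
        have hε2 : ε ≤ x 1 := min_le_right _ _
        have hε : 0 < ε := lt_min ha hb
        refine not_extreme_of_dir (u := ![1,-1]) (pt_ne_zero_left one_ne_zero) hε ?_ ?_ hx
        · rw [hxv, add_smul_pt, memP4]; norm_num <;> (and_intros <;> linarith)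
        · rw [hxv, sub_smul_pt, memP4]; norm_num <;> (and_intros <;> linarith)
      · exfalso
        set ε := min (x 0) (1 - x 0 - x 1) with hεdef
        have hε1 : ε ≤ x 0 := min_le_left _ _
        have hε2 : ε ≤ 1 - x 0 - x 1 := min_le_right _ _
        have hε : 0 < ε := lt_min ha (by linarith)
        refine not_extreme_of_dir (u := ![1,0]) (pt_ne_zero_left one_ne_zero) hε ?_ ?_ hx
        · rw [hxv, add_smul_pt, memP4]; norm_num <;> (and_intros <;> linarith)
        · rw [hxv, sub_smul_pt, memP4]; norm_num <;> (and_intros <;> linarith)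

lemma seg4_0 : {x ∈ PolyB B4 d4 | B4.mulVec x 0 = d4 0} = segment ℝ ![0,0] ![0,1] := by
  ext x
  simp only [Set.mem_sep_iff, Set.mem_setOf_eq]
  rw [memP4, (row4 x).1]
  constructor
  · rintro ⟨⟨h0, h1, h2⟩, he⟩
    have ha : x 0 = 0 := by simp [d4] at he; linarith
    refine ⟨1 - x 1, x 1, by linarith, h1, by ring, ?_⟩
    funext i; fin_cases i <;> simp <;> linarith
  · rintro ⟨u, v, hu, hv, huv, rfl⟩
    have hx : u • ![(0:ℝ),0] + v • ![(0:ℝ),1] = ![0, v] := by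
      funext i; fin_cases i <;> simp
    rw [hx]
    norm_num [d4]
    and_intros <;> linarith

lemma seg4_1 : {x ∈ PolyB B4 d4 | B4.mulVec x 1 = d4 1} = segment ℝ ![0,0] ![1,0] := by
  ext x
  simp only [Set.mem_sep_iff, Set.mem_setOf_eq]
  rw [memP4, (row4 x).2.1]
  constructor
  · rintro ⟨⟨h0, h1, h2⟩, he⟩
    have ha : x 1 = 0 := by simp [d4] at he; linarith
    refine ⟨1 - x 0, x 0, by linarith, h0, by ring, ?_⟩
    funext i; fin_cases i <;> simp <;> linarith
  · rintro ⟨u, v, hu, hv, huv, rfl⟩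
    have hx : u • ![(0:ℝ),0] + v • ![(1:ℝ),0] = ![v, 0] := by
      funext i; fin_cases i <;> simp
    rw [hx]
    norm_num [d4]
    and_intros <;> linarith

lemma seg4_2 : {x ∈ PolyB B4 d4 | B4.mulVec x 2 = d4 2} = segment ℝ ![1,0] ![0,1] := by
  ext x
  simp only [Set.mem_sep_iff, Set.mem_setOf_eq]
  rw [memP4, (row4 x).2.2]
  constructor
  · rintro ⟨⟨h0, h1, h2⟩, he⟩
    have ha : x 0 + x 1 = 1 := by simpa [d4] using he
    refine ⟨x 0, x 1, h0, h1, ha, ?_⟩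
    funext i; fin_cases i <;> simp
  · rintro ⟨u, v, hu, hv, huv, rfl⟩
    have hx : u • ![(1:ℝ),0] + v • ![(0:ℝ),1] = ![u, v] := by
      funext i; fin_cases i <;> simp
    rw [hx]
    norm_num [d4, Matrix.cons_val_two, Matrix.cons_val_three]
    and_intros <;> linarith

lemma facet_of_seg {m : ℕ} (B : Matrix (Fin m) (Fin 2) ℝ) (d : Fin m → ℝ) (i : Fin m)
    (a b : Fin 2 → ℝ) (hseg : {x ∈ PolyB B d | B.mulVec x i = d i} = segment ℝ a b)
    (hne : a ≠ b) : IsFacetOf (PolyB B d) {x ∈ PolyB B d | B.mulVec x i = d i} := by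
  refine ⟨⟨isExtreme_facet B d i, ?_⟩, ?_, ?_⟩
  · rw [hseg]; exact convex_segment _ _
  · rw [hseg]; exact ⟨a, left_mem_segment ℝ a b⟩
  · rw [hseg, finrank_vectorSpan_segment hne]

lemma minrep4 : IsMinimalRep B4 d4 := by
  intro i
  fin_cases i
  · exact facet_of_seg B4 d4 0 _ _ seg4_0 (by intro h; have := congrFun h 1; norm_num at this)
  · exact facet_of_seg B4 d4 1 _ _ seg4_1 (by intro h; have := congrFun h 0; norm_num at this)
  · exact facet_of_seg B4 d4 2 _ _ seg4_2 (by intro h; have := congrFun h 0; norm_num at this)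

lemma circ4 (g : Fin 2 → ℝ) (h : IsCircuitB B4 g) :
    g = ![1,0] ∨ g = ![-1,0] ∨ g = ![0,1] ∨ g = ![0,-1] ∨ g = ![1,-1] ∨ g = ![-1,1] := by
  obtain ⟨hne, ⟨gz, hgz, hgcd⟩, hmin⟩ := h
  have hgv : g = ![(gz 0 : ℝ), (gz 1 : ℝ)] := by
    funext i; fin_cases i
    · exact hgz 0
    · exact hgz 1
  have key : g 0 = 0 ∨ g 1 = 0 ∨ g 0 + g 1 = 0 := by
    by_contra hA
    push_neg at hA
    obtain ⟨h1, h2, h3⟩ := hA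
    apply hmin
    refine ⟨![1,0], pt_ne_zero_left one_ne_zero, ?_⟩
    have hsub : {i | B4.mulVec ![1,0] i ≠ 0} ⊆ {i | B4.mulVec g i ≠ 0} := by
      intro i _
      simp only [Set.mem_setOf_eq]
      fin_cases i
      · show B4.mulVec g 0 ≠ 0; rw [(row4 g).1]; simpa using h1
      · show B4.mulVec g 1 ≠ 0; rw [(row4 g).2.1]; simpa using h2
      · show B4.mulVec g 2 ≠ 0; rw [(row4 g).2.2]; exact h3
    refine (Set.ssubset_iff_of_subset hsub).2 ⟨1, ?_, ?_⟩
    · simp only [Set.mem_setOf_eq]; rw [(row4 g).2.1]; simpa using h2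
    · simp only [Set.mem_setOf_eq]; rw [(row4 ![1,0]).2.1]; norm_num
  have c0 : g 0 = (gz 0 : ℝ) := hgz 0
  have c1 : g 1 = (gz 1 : ℝ) := hgz 1
  rcases key with hk | hk | hk
  · -- g 0 = 0
    have hz0 : gz 0 = 0 := by exact_mod_cast c0 ▸ hk
    rcases unit_of_dvd_all gz hgcd (gz 1) (by
        intro i; fin_cases i
        · show gz 1 ∣ gz 0; rw [hz0]; exact dvd_zero _
        · exact dvd_refl _) with hz1 | hz1
    · right; right; left; rw [hgv, hz0, hz1]; norm_num
    · right; right; right; left; rw [hgv, hz0, hz1]; norm_num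
  · -- g 1 = 0
    have hz1 : gz 1 = 0 := by exact_mod_cast c1 ▸ hk
    rcases unit_of_dvd_all gz hgcd (gz 0) (by
        intro i; fin_cases i
        · exact dvd_refl _
        · show gz 0 ∣ gz 1; rw [hz1]; exact dvd_zero _) with hz0 | hz0
    · left; rw [hgv, hz0, hz1]; norm_num
    · right; left; rw [hgv, hz0, hz1]; norm_num
  · -- g 0 + g 1 = 0
    have hz : gz 0 + gz 1 = 0 := by
      have : (gz 0 : ℝ) + (gz 1 : ℝ) = 0 := by rw [← c0, ← c1]; exact hk
      exact_mod_cast this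
    rcases unit_of_dvd_all gz hgcd (gz 0) (by
        intro i; fin_cases i
        · exact dvd_refl _
        · show gz 0 ∣ gz 1; exact ⟨-1, by omega⟩) with hz0 | hz0
    · right; right; right; right; left
      rw [hgv, hz0, show gz 1 = -1 by omega]; norm_num
    · right; right; right; right; right
      rw [hgv, hz0, show gz 1 = 1 by omega]; norm_num

def S4 : Set (Fin 2 → ℝ) := {![0,0], ![1,0], ![0,1]}

lemma step4 : ∀ x ∈ S4, ∀ (g : Fin 2 → ℝ) (α : ℝ), IsCircuitB B4 g → 0 < α →
    x + α • g ∈ PolyB B4 d4 → (∀ β, α < β → x + β • g ∉ PolyB B4 d4) →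
    (x + α • g ∈ S4) ∧ x ≠ x + α • g ∧
      IsExtreme ℝ (PolyB B4 d4) (segment ℝ x (x + α • g)) := by
  intro x hx g α hg hα hin hmax
  simp only [S4, Set.mem_insert_iff, Set.mem_singleton_iff] at hx
  rcases circ4 g hg with rfl | rfl | rfl | rfl | rfl | rfl <;>
    rcases hx with rfl | rfl | rfl
  all_goals try (exfalso; rw [add_smul_pt, memP4] at hin; norm_num at hin; linarith)
  -- g = ![1,0], x = ![0,0] : step to ![1,0]
  · have hle : α ≤ 1 := by rw [add_smul_pt, memP4] at hin; norm_num at hin; linarith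
    have hαeq : α = 1 := by
      by_contra hne'
      exact hmax 1 (lt_of_le_of_ne hle hne') (by rw [add_smul_pt, memP4]; norm_num)
    subst hαeq
    have hland : ![(0:ℝ),0] + (1:ℝ) • ![(1:ℝ),0] = ![1,0] := by
      rw [add_smul_pt]; exact pt_eq_iff.2 ⟨by norm_num, by norm_num⟩
    rw [hland]
    refine ⟨by simp [S4], ?_, ?_⟩
    · intro hcon; have := congrFun hcon 0; norm_num at this
    · have h := isExtreme_facet B4 d4 1; rw [seg4_1] at h; exact h
  -- g = ![-1,0], x = ![1,0] : step to ![0,0]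
  · have hle : α ≤ 1 := by rw [add_smul_pt, memP4] at hin; norm_num at hin; linarith
    have hαeq : α = 1 := by
      by_contra hne'
      exact hmax 1 (lt_of_le_of_ne hle hne') (by rw [add_smul_pt, memP4]; norm_num)
    subst hαeq
    have hland : ![(1:ℝ),0] + (1:ℝ) • ![(-1:ℝ),0] = ![0,0] := by
      rw [add_smul_pt]; exact pt_eq_iff.2 ⟨by norm_num, by norm_num⟩
    rw [hland]
    refine ⟨by simp [S4], ?_, ?_⟩
    · intro hcon; have := congrFun hcon 0; norm_num at this
    · have h := isExtreme_facet B4 d4 1; rw [seg4_1] at h; rw [segment_symm]; exact h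
  -- g = ![0,1], x = ![0,0] : step to ![0,1]
  · have hle : α ≤ 1 := by rw [add_smul_pt, memP4] at hin; norm_num at hin; linarith
    have hαeq : α = 1 := by
      by_contra hne'
      exact hmax 1 (lt_of_le_of_ne hle hne') (by rw [add_smul_pt, memP4]; norm_num)
    subst hαeq
    have hland : ![(0:ℝ),0] + (1:ℝ) • ![(0:ℝ),1] = ![0,1] := by
      rw [add_smul_pt]; exact pt_eq_iff.2 ⟨by norm_num, by norm_num⟩
    rw [hland]
    refine ⟨by simp [S4], ?_, ?_⟩
    · intro hcon; have := congrFun hcon 1; norm_num at this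
    · have h := isExtreme_facet B4 d4 0; rw [seg4_0] at h; exact h
  -- g = ![0,-1], x = ![0,1] : step to ![0,0]
  · have hle : α ≤ 1 := by rw [add_smul_pt, memP4] at hin; norm_num at hin; linarith
    have hαeq : α = 1 := by
      by_contra hne'
      exact hmax 1 (lt_of_le_of_ne hle hne') (by rw [add_smul_pt, memP4]; norm_num)
    subst hαeq
    have hland : ![(0:ℝ),1] + (1:ℝ) • ![(0:ℝ),-1] = ![0,0] := by
      rw [add_smul_pt]; exact pt_eq_iff.2 ⟨by norm_num, by norm_num⟩
    rw [hland]
    refine ⟨by simp [S4], ?_, ?_⟩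
    · intro hcon; have := congrFun hcon 1; norm_num at this
    · have h := isExtreme_facet B4 d4 0; rw [seg4_0] at h; rw [segment_symm]; exact h
  -- g = ![1,-1], x = ![0,1] : step to ![1,0]
  · have hle : α ≤ 1 := by rw [add_smul_pt, memP4] at hin; norm_num at hin; linarith
    have hαeq : α = 1 := by
      by_contra hne'
      exact hmax 1 (lt_of_le_of_ne hle hne') (by rw [add_smul_pt, memP4]; norm_num)
    subst hαeq
    have hland : ![(0:ℝ),1] + (1:ℝ) • ![(1:ℝ),-1] = ![1,0] := by
      rw [add_smul_pt]; exact pt_eq_iff.2 ⟨by norm_num, by norm_num⟩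
    rw [hland]
    refine ⟨by simp [S4], ?_, ?_⟩
    · intro hcon; have := congrFun hcon 0; norm_num at this
    · have h := isExtreme_facet B4 d4 2; rw [seg4_2] at h; rw [segment_symm]; exact h
  -- g = ![-1,1], x = ![1,0] : step to ![0,1]
  · have hle : α ≤ 1 := by rw [add_smul_pt, memP4] at hin; norm_num at hin; linarith
    have hαeq : α = 1 := by
      by_contra hne'
      exact hmax 1 (lt_of_le_of_ne hle hne') (by rw [add_smul_pt, memP4]; norm_num)
    subst hαeq
    have hland : ![(1:ℝ),0] + (1:ℝ) • ![(-1:ℝ),1] = ![0,1] := by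
      rw [add_smul_pt]; exact pt_eq_iff.2 ⟨by norm_num, by norm_num⟩
    rw [hland]
    refine ⟨by simp [S4], ?_, ?_⟩
    · intro hcon; have := congrFun hcon 0; norm_num at this
    · have h := isExtreme_facet B4 d4 2; rw [seg4_2] at h; exact h

lemma bounded4 : Bornology.IsBounded (PolyB B4 d4) := by
  apply (Metric.isBounded_closedBall (x := (0 : Fin 2 → ℝ)) (r := 2)).subset
  intro x hx
  rw [memP4] at hx
  rw [Metric.mem_closedBall, dist_zero_right]
  refine pi_norm_le_iff_of_nonneg (by norm_num) |>.2 ?_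
  intro i
  fin_cases i
  · show ‖x 0‖ ≤ 2
    rw [Real.norm_eq_abs, abs_le]
    constructor <;> linarith [hx.1, hx.2.1, hx.2.2]
  · show ‖x 1‖ ≤ 2
    rw [Real.norm_eq_abs, abs_le]
    constructor <;> linarith [hx.1, hx.2.1, hx.2.2]

lemma ecw4 : ∀ (k : ℕ) (y : Fin (k + 1) → Fin 2 → ℝ),
    IsCircuitWalk (PolyB B4 d4) (IsCircuitB B4) y → IsEdgeWalk (PolyB B4 d4) y := by
  intro k y hw i
  have hmemS : ∀ j, y j ∈ S4 := walk_induct hw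
    (fun x hx => by rcases ext4 x hx with h | h | h <;> simp [S4, h])
    (fun x hx g α hg hα hin hmax => (step4 x hx g α hg hα hin hmax).1)
  obtain ⟨hmem, g, α, hg, hα, heq, hmax⟩ := hw.2.2 i
  have hin : y i.succ ∈ PolyB B4 d4 := walk_mem_P hw i.succ
  rw [heq] at hin ⊢
  obtain ⟨-, h2, h3⟩ := step4 _ (hmemS i.castSucc) g α hg hα hin hmax
  exact ⟨h2, h3⟩

lemma P4_clause : IsIntegral2DPolytope B4 d4 ∧ ∀ (k : ℕ) (y : Fin (k + 1) → Fin 2 → ℝ),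
    IsCircuitWalk (PolyB B4 d4) (IsCircuitB B4) y → IsEdgeWalk (PolyB B4 d4) y := by
  constructor
  · refine ⟨bounded4, ⟨![0,0], (memP4 _).2 (by norm_num)⟩, ?_, ?_, minrep4⟩
    · exact affineSpan_top_of_pts ((memP4 _).2 (by norm_num)) ((memP4 _).2 (by norm_num))
        ((memP4 _).2 (by norm_num))
    · intro v hv j
      rcases ext4 v hv with h | h | h <;> subst h
      · fin_cases j
        exacts [⟨0, by norm_num⟩, ⟨0, by norm_num⟩]
      · fin_cases j
        exacts [⟨1, by norm_num⟩, ⟨0, by norm_num⟩]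
      · fin_cases j
        exacts [⟨0, by norm_num⟩, ⟨1, by norm_num⟩]
  · exact ecw4

/-! ### P₂ : the trapezoid with vertices (0,0), (2,0), (1,1), (0,1) -/

def B2 : Matrix (Fin 4) (Fin 2) ℝ := !![0,-1; 1,1; 0,1; -1,0]
def d2 : Fin 4 → ℝ := ![0,2,1,0]

lemma row2 (x : Fin 2 → ℝ) : B2.mulVec x 0 = -x 1 ∧ B2.mulVec x 1 = x 0 + x 1 ∧
    B2.mulVec x 2 = x 1 ∧ B2.mulVec x 3 = -x 0 := by
  refine ⟨?_, ?_, ?_, ?_⟩ <;> simp [B2, Matrix.mulVec, dotProduct, Fin.sum_univ_succ]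

lemma memP2 (x : Fin 2 → ℝ) : x ∈ PolyB B2 d2 ↔
    0 ≤ x 1 ∧ x 0 + x 1 ≤ 2 ∧ x 1 ≤ 1 ∧ 0 ≤ x 0 := by
  simp [PolyB, B2, d2, Matrix.mulVec, dotProduct, Fin.forall_fin_succ, Fin.sum_univ_succ]

lemma vA2 : ![(0:ℝ),0] ∈ (PolyB B2 d2).extremePoints ℝ := by
  refine vertex_extreme B2 d2 _ ((memP2 _).2 (by norm_num)) 0 3 ?_ ?_ ?_
  · rw [(row2 _).1]; norm_num [d2]
  · rw [(row2 _).2.2.2]; norm_num [d2, Matrix.cons_val_two, Matrix.cons_val_three]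
  · intro x hx h0 h1
    rw [(row2 x).1] at h0; rw [(row2 x).2.2.2] at h1
    simp [d2] at h0 h1
    funext i; fin_cases i <;> simp [h0, h1]

lemma vB2 : ![(2:ℝ),0] ∈ (PolyB B2 d2).extremePoints ℝ := by
  refine vertex_extreme B2 d2 _ ((memP2 _).2 (by norm_num)) 0 1 ?_ ?_ ?_
  · rw [(row2 _).1]; norm_num [d2]
  · rw [(row2 _).2.1]; norm_num [d2]
  · intro x hx h0 h1
    rw [(row2 x).1] at h0; rw [(row2 x).2.1] at h1
    simp [d2] at h0 h1
    funext i; fin_cases i <;> simp [h0] <;> linarith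

lemma vC2 : ![(1:ℝ),1] ∈ (PolyB B2 d2).extremePoints ℝ := by
  refine vertex_extreme B2 d2 _ ((memP2 _).2 (by norm_num)) 1 2 ?_ ?_ ?_
  · rw [(row2 _).2.1]; norm_num [d2]
  · rw [(row2 _).2.2.1]; norm_num [d2, Matrix.cons_val_two, Matrix.cons_val_three]
  · intro x hx h0 h1
    rw [(row2 x).2.1] at h0; rw [(row2 x).2.2.1] at h1
    simp [d2] at h0 h1
    funext i; fin_cases i <;> simp [h1] <;> linarith

lemma vD2 : ![(0:ℝ),1] ∈ (PolyB B2 d2).extremePoints ℝ := by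
  refine vertex_extreme B2 d2 _ ((memP2 _).2 (by norm_num)) 2 3 ?_ ?_ ?_
  · rw [(row2 _).2.2.1]; norm_num [d2, Matrix.cons_val_two, Matrix.cons_val_three]
  · rw [(row2 _).2.2.2]; norm_num [d2, Matrix.cons_val_two, Matrix.cons_val_three]
  · intro x hx h0 h1
    rw [(row2 x).2.2.1] at h0; rw [(row2 x).2.2.2] at h1
    simp [d2] at h0 h1
    funext i; fin_cases i <;> simp [h0, h1]

lemma ext2 (x : Fin 2 → ℝ) (hx : x ∈ (PolyB B2 d2).extremePoints ℝ) :
    x = ![0,0] ∨ x = ![2,0] ∨ x = ![1,1] ∨ x = ![0,1] := by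
  obtain ⟨h0, h1, h2, h3⟩ := (memP2 x).1 hx.1
  have hxv : x = ![x 0, x 1] := by funext i; fin_cases i <;> rfl
  rcases eq_or_lt_of_le h0 with hb | hb
  · -- x 1 = 0
    rcases eq_or_lt_of_le h3 with ha | ha
    · left; funext i; fin_cases i <;> simp [← ha, ← hb]
    · rcases eq_or_lt_of_le h1 with hc | hc
      · right; left; funext i; fin_cases i <;> simp <;> linarith
      · exfalso
        set ε := min (x 0) (2 - x 0 - x 1) with hεdef
        have hε1 : ε ≤ x 0 := min_le_left _ _
        have hε2 : ε ≤ 2 - x 0 - x 1 := min_le_right _ _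
        have hε : 0 < ε := lt_min ha (by linarith)
        refine not_extreme_of_dir (u := ![1,0]) (pt_ne_zero_left one_ne_zero) hε ?_ ?_ hx
        · rw [hxv, add_smul_pt, memP2]; norm_num <;> (and_intros <;> linarith)
        · rw [hxv, sub_smul_pt, memP2]; norm_num <;> (and_intros <;> linarith)
  · rcases eq_or_lt_of_le h2 with hb1 | hb1
    · -- x 1 = 1
      rcases eq_or_lt_of_le h3 with ha | ha
      · right; right; right; funext i; fin_cases i <;> simp <;> linarith
      · rcases eq_or_lt_of_le h1 with hc | hc
        · right; right; left; funext i; fin_cases i <;> simp <;> linarith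
        · exfalso
          set ε := min (x 0) (2 - x 0 - x 1) with hεdef
          have hε1 : ε ≤ x 0 := min_le_left _ _
          have hε2 : ε ≤ 2 - x 0 - x 1 := min_le_right _ _
          have hε : 0 < ε := lt_min ha (by linarith)
          refine not_extreme_of_dir (u := ![1,0]) (pt_ne_zero_left one_ne_zero) hε ?_ ?_ hx
          · rw [hxv, add_smul_pt, memP2]; norm_num <;> (and_intros <;> linarith)
          · rw [hxv, sub_smul_pt, memP2]; norm_num <;> (and_intros <;> linarith)
    · -- 0 < x 1 < 1
      exfalso
      rcases eq_or_lt_of_le h3 with ha | ha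
      · set ε := min (x 1) (1 - x 1) with hεdef
        have hε1 : ε ≤ x 1 := min_le_left _ _
        have hε2 : ε ≤ 1 - x 1 := min_le_right _ _
        have hε : 0 < ε := lt_min hb (by linarith)
        refine not_extreme_of_dir (u := ![0,1]) (pt_ne_zero_right one_ne_zero) hε ?_ ?_ hx
        · rw [hxv, add_smul_pt, memP2]; norm_num <;> (and_intros <;> linarith)
        · rw [hxv, sub_smul_pt, memP2]; norm_num <;> (and_intros <;> linarith)
      · rcases eq_or_lt_of_le h1 with hc | hc
        · set ε := min (x 1) (1 - x 1) with hεdef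
          have hε1 : ε ≤ x 1 := min_le_left _ _
          have hε2 : ε ≤ 1 - x 1 := min_le_right _ _
          have hε : 0 < ε := lt_min hb (by linarith)
          refine not_extreme_of_dir (u := ![1,-1]) (pt_ne_zero_left one_ne_zero) hε ?_ ?_ hx
          · rw [hxv, add_smul_pt, memP2]; norm_num <;> (and_intros <;> linarith)
          · rw [hxv, sub_smul_pt, memP2]; norm_num <;> (and_intros <;> linarith)
        · set ε := min (x 0) (2 - x 0 - x 1) with hεdef
          have hε1 : ε ≤ x 0 := min_le_left _ _
          have hε2 : ε ≤ 2 - x 0 - x 1 := min_le_right _ _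
          have hε : 0 < ε := lt_min ha (by linarith)
          refine not_extreme_of_dir (u := ![1,0]) (pt_ne_zero_left one_ne_zero) hε ?_ ?_ hx
          · rw [hxv, add_smul_pt, memP2]; norm_num <;> (and_intros <;> linarith)
          · rw [hxv, sub_smul_pt, memP2]; norm_num <;> (and_intros <;> linarith)

lemma seg2_0 : {x ∈ PolyB B2 d2 | B2.mulVec x 0 = d2 0} = segment ℝ ![0,0] ![2,0] := by
  ext x
  simp only [Set.mem_sep_iff, Set.mem_setOf_eq]
  rw [memP2, (row2 x).1]
  constructor
  · rintro ⟨⟨h0, h1, h2, h3⟩, he⟩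
    have hb : x 1 = 0 := by simp [d2] at he; linarith
    refine ⟨1 - x 0 / 2, x 0 / 2, by linarith, by linarith, by ring, ?_⟩
    funext i; fin_cases i <;> simp <;> linarith
  · rintro ⟨u, v, hu, hv, huv, rfl⟩
    have hx : u • ![(0:ℝ),0] + v • ![(2:ℝ),0] = ![2*v, 0] := by
      funext i; fin_cases i <;> simp <;> ring
    rw [hx]
    norm_num [d2]
    and_intros <;> linarith

lemma seg2_1 : {x ∈ PolyB B2 d2 | B2.mulVec x 1 = d2 1} = segment ℝ ![2,0] ![1,1] := by
  ext x
  simp only [Set.mem_sep_iff, Set.mem_setOf_eq]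
  rw [memP2, (row2 x).2.1]
  constructor
  · rintro ⟨⟨h0, h1, h2, h3⟩, he⟩
    have hb : x 0 + x 1 = 2 := by simpa [d2] using he
    refine ⟨1 - x 1, x 1, by linarith, h0, by ring, ?_⟩
    funext i; fin_cases i <;> simp <;> linarith
  · rintro ⟨u, v, hu, hv, huv, rfl⟩
    have hx : u • ![(2:ℝ),0] + v • ![(1:ℝ),1] = ![2*u + v, v] := by
      funext i; fin_cases i <;> simp <;> ring
    rw [hx]
    norm_num [d2]
    and_intros <;> linarith

lemma seg2_2 : {x ∈ PolyB B2 d2 | B2.mulVec x 2 = d2 2} = segment ℝ ![0,1] ![1,1] := by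
  ext x
  simp only [Set.mem_sep_iff, Set.mem_setOf_eq]
  rw [memP2, (row2 x).2.2.1]
  constructor
  · rintro ⟨⟨h0, h1, h2, h3⟩, he⟩
    have hb : x 1 = 1 := by simpa [d2] using he
    refine ⟨1 - x 0, x 0, by linarith, h3, by ring, ?_⟩
    funext i; fin_cases i <;> simp <;> linarith
  · rintro ⟨u, v, hu, hv, huv, rfl⟩
    have hx : u • ![(0:ℝ),1] + v • ![(1:ℝ),1] = ![v, u + v] := by
      funext i; fin_cases i <;> simp <;> ring
    rw [hx]
    norm_num [d2, Matrix.cons_val_two, Matrix.cons_val_three]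
    and_intros <;> linarith

lemma seg2_3 : {x ∈ PolyB B2 d2 | B2.mulVec x 3 = d2 3} = segment ℝ ![0,0] ![0,1] := by
  ext x
  simp only [Set.mem_sep_iff, Set.mem_setOf_eq]
  rw [memP2, (row2 x).2.2.2]
  constructor
  · rintro ⟨⟨h0, h1, h2, h3⟩, he⟩
    have ha : x 0 = 0 := by simp [d2] at he; linarith
    refine ⟨1 - x 1, x 1, by linarith, h0, by ring, ?_⟩
    funext i; fin_cases i <;> simp <;> linarith
  · rintro ⟨u, v, hu, hv, huv, rfl⟩
    have hx : u • ![(0:ℝ),0] + v • ![(0:ℝ),1] = ![0, v] := by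
      funext i; fin_cases i <;> simp
    rw [hx]
    norm_num [d2, Matrix.cons_val_two, Matrix.cons_val_three]
    and_intros <;> linarith

lemma minrep2 : IsMinimalRep B2 d2 := by
  intro i
  fin_cases i
  · exact facet_of_seg B2 d2 0 _ _ seg2_0 (by intro h; have := congrFun h 0; norm_num at this)
  · exact facet_of_seg B2 d2 1 _ _ seg2_1 (by intro h; have := congrFun h 0; norm_num at this)
  · exact facet_of_seg B2 d2 2 _ _ seg2_2 (by intro h; have := congrFun h 0; norm_num at this)
  · exact facet_of_seg B2 d2 3 _ _ seg2_3 (by intro h; have := congrFun h 1; norm_num at this)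

lemma circ2 (g : Fin 2 → ℝ) (h : IsCircuitB B2 g) :
    g = ![1,0] ∨ g = ![-1,0] ∨ g = ![0,1] ∨ g = ![0,-1] ∨ g = ![1,-1] ∨ g = ![-1,1] := by
  obtain ⟨hne, ⟨gz, hgz, hgcd⟩, hmin⟩ := h
  have hgv : g = ![(gz 0 : ℝ), (gz 1 : ℝ)] := by
    funext i; fin_cases i
    · exact hgz 0
    · exact hgz 1
  have key : g 0 = 0 ∨ g 1 = 0 ∨ g 0 + g 1 = 0 := by
    by_contra hA
    push_neg at hA
    obtain ⟨h1, h2, h3⟩ := hA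
    apply hmin
    refine ⟨![1,0], pt_ne_zero_left one_ne_zero, ?_⟩
    have hsub : {i | B2.mulVec ![1,0] i ≠ 0} ⊆ {i | B2.mulVec g i ≠ 0} := by
      intro i _
      simp only [Set.mem_setOf_eq]
      fin_cases i
      · show B2.mulVec g 0 ≠ 0; rw [(row2 g).1]; simpa using h2
      · show B2.mulVec g 1 ≠ 0; rw [(row2 g).2.1]; exact h3
      · show B2.mulVec g 2 ≠ 0; rw [(row2 g).2.2.1]; exact h2
      · show B2.mulVec g 3 ≠ 0; rw [(row2 g).2.2.2]; simpa using h1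
    refine (Set.ssubset_iff_of_subset hsub).2 ⟨0, ?_, ?_⟩
    · simp only [Set.mem_setOf_eq]; rw [(row2 g).1]; simpa using h2
    · simp only [Set.mem_setOf_eq]; rw [(row2 ![1,0]).1]; norm_num
  have c0 : g 0 = (gz 0 : ℝ) := hgz 0
  have c1 : g 1 = (gz 1 : ℝ) := hgz 1
  rcases key with hk | hk | hk
  · have hz0 : gz 0 = 0 := by exact_mod_cast c0 ▸ hk
    rcases unit_of_dvd_all gz hgcd (gz 1) (by
        intro i; fin_cases i
        · show gz 1 ∣ gz 0; rw [hz0]; exact dvd_zero _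
        · exact dvd_refl _) with hz1 | hz1
    · right; right; left; rw [hgv, hz0, hz1]; norm_num
    · right; right; right; left; rw [hgv, hz0, hz1]; norm_num
  · have hz1 : gz 1 = 0 := by exact_mod_cast c1 ▸ hk
    rcases unit_of_dvd_all gz hgcd (gz 0) (by
        intro i; fin_cases i
        · exact dvd_refl _
        · show gz 0 ∣ gz 1; rw [hz1]; exact dvd_zero _) with hz0 | hz0
    · left; rw [hgv, hz0, hz1]; norm_num
    · right; left; rw [hgv, hz0, hz1]; norm_num
  · have hz : gz 0 + gz 1 = 0 := by
      have : (gz 0 : ℝ) + (gz 1 : ℝ) = 0 := by rw [← c0, ← c1]; exact hk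
      exact_mod_cast this
    rcases unit_of_dvd_all gz hgcd (gz 0) (by
        intro i; fin_cases i
        · exact dvd_refl _
        · show gz 0 ∣ gz 1; exact ⟨-1, by omega⟩) with hz0 | hz0
    · right; right; right; right; left
      rw [hgv, hz0, show gz 1 = -1 by omega]; norm_num
    · right; right; right; right; right
      rw [hgv, hz0, show gz 1 = 1 by omega]; norm_num

def S2 : Set (Fin 2 → ℝ) := {![0,0], ![2,0], ![1,1], ![0,1], ![1,0]}

lemma step2 : ∀ x ∈ S2, ∀ (g : Fin 2 → ℝ) (α : ℝ), IsCircuitB B2 g → 0 < α →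
    x + α • g ∈ PolyB B2 d2 → (∀ β, α < β → x + β • g ∉ PolyB B2 d2) →
    x + α • g ∈ S2 := by
  intro x hx g α hg hα hin hmax
  simp only [S2, Set.mem_insert_iff, Set.mem_singleton_iff] at hx
  rcases circ2 g hg with rfl | rfl | rfl | rfl | rfl | rfl <;>
    rcases hx with rfl | rfl | rfl | rfl | rfl
  all_goals try (exfalso; rw [add_smul_pt, memP2] at hin; norm_num at hin; linarith)
  -- g = ![1,0], x = A : step to B
  · have hle : α ≤ 2 := by rw [add_smul_pt, memP2] at hin; norm_num at hin; linarith
    have hαeq : α = 2 := by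
      by_contra hne'
      exact hmax 2 (lt_of_le_of_ne hle hne') (by rw [add_smul_pt, memP2]; norm_num)
    subst hαeq
    have hland : ![(0:ℝ),0] + (2:ℝ) • ![(1:ℝ),0] = ![2,0] := by
      rw [add_smul_pt]; exact pt_eq_iff.2 ⟨by norm_num, by norm_num⟩
    rw [hland]; simp [S2]
  -- g = ![1,0], x = D : step to C
  · have hle : α ≤ 1 := by rw [add_smul_pt, memP2] at hin; norm_num at hin; linarith
    have hαeq : α = 1 := by
      by_contra hne'
      exact hmax 1 (lt_of_le_of_ne hle hne') (by rw [add_smul_pt, memP2]; norm_num)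
    subst hαeq
    have hland : ![(0:ℝ),1] + (1:ℝ) • ![(1:ℝ),0] = ![1,1] := by
      rw [add_smul_pt]; exact pt_eq_iff.2 ⟨by norm_num, by norm_num⟩
    rw [hland]; simp [S2]
  -- g = ![1,0], x = E : step to B
  · have hle : α ≤ 1 := by rw [add_smul_pt, memP2] at hin; norm_num at hin; linarith
    have hαeq : α = 1 := by
      by_contra hne'
      exact hmax 1 (lt_of_le_of_ne hle hne') (by rw [add_smul_pt, memP2]; norm_num)
    subst hαeq
    have hland : ![(1:ℝ),0] + (1:ℝ) • ![(1:ℝ),0] = ![2,0] := by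
      rw [add_smul_pt]; exact pt_eq_iff.2 ⟨by norm_num, by norm_num⟩
    rw [hland]; simp [S2]
  -- g = ![-1,0], x = B : step to A
  · have hle : α ≤ 2 := by rw [add_smul_pt, memP2] at hin; norm_num at hin; linarith
    have hαeq : α = 2 := by
      by_contra hne'
      exact hmax 2 (lt_of_le_of_ne hle hne') (by rw [add_smul_pt, memP2]; norm_num)
    subst hαeq
    have hland : ![(2:ℝ),0] + (2:ℝ) • ![(-1:ℝ),0] = ![0,0] := by
      rw [add_smul_pt]; exact pt_eq_iff.2 ⟨by norm_num, by norm_num⟩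
    rw [hland]; simp [S2]
  -- g = ![-1,0], x = C : step to D
  · have hle : α ≤ 1 := by rw [add_smul_pt, memP2] at hin; norm_num at hin; linarith
    have hαeq : α = 1 := by
      by_contra hne'
      exact hmax 1 (lt_of_le_of_ne hle hne') (by rw [add_smul_pt, memP2]; norm_num)
    subst hαeq
    have hland : ![(1:ℝ),1] + (1:ℝ) • ![(-1:ℝ),0] = ![0,1] := by
      rw [add_smul_pt]; exact pt_eq_iff.2 ⟨by norm_num, by norm_num⟩
    rw [hland]; simp [S2]
  -- g = ![-1,0], x = E : step to A
  · have hle : α ≤ 1 := by rw [add_smul_pt, memP2] at hin; norm_num at hin; linarith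
    have hαeq : α = 1 := by
      by_contra hne'
      exact hmax 1 (lt_of_le_of_ne hle hne') (by rw [add_smul_pt, memP2]; norm_num)
    subst hαeq
    have hland : ![(1:ℝ),0] + (1:ℝ) • ![(-1:ℝ),0] = ![0,0] := by
      rw [add_smul_pt]; exact pt_eq_iff.2 ⟨by norm_num, by norm_num⟩
    rw [hland]; simp [S2]
  -- g = ![0,1], x = A : step to D
  · have hle : α ≤ 1 := by rw [add_smul_pt, memP2] at hin; norm_num at hin; linarith
    have hαeq : α = 1 := by
      by_contra hne'
      exact hmax 1 (lt_of_le_of_ne hle hne') (by rw [add_smul_pt, memP2]; norm_num)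
    subst hαeq
    have hland : ![(0:ℝ),0] + (1:ℝ) • ![(0:ℝ),1] = ![0,1] := by
      rw [add_smul_pt]; exact pt_eq_iff.2 ⟨by norm_num, by norm_num⟩
    rw [hland]; simp [S2]
  -- g = ![0,1], x = E : step to C
  · have hle : α ≤ 1 := by rw [add_smul_pt, memP2] at hin; norm_num at hin; linarith
    have hαeq : α = 1 := by
      by_contra hne'
      exact hmax 1 (lt_of_le_of_ne hle hne') (by rw [add_smul_pt, memP2]; norm_num)
    subst hαeq
    have hland : ![(1:ℝ),0] + (1:ℝ) • ![(0:ℝ),1] = ![1,1] := by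
      rw [add_smul_pt]; exact pt_eq_iff.2 ⟨by norm_num, by norm_num⟩
    rw [hland]; simp [S2]
  -- g = ![0,-1], x = C : step to E
  · have hle : α ≤ 1 := by rw [add_smul_pt, memP2] at hin; norm_num at hin; linarith
    have hαeq : α = 1 := by
      by_contra hne'
      exact hmax 1 (lt_of_le_of_ne hle hne') (by rw [add_smul_pt, memP2]; norm_num)
    subst hαeq
    have hland : ![(1:ℝ),1] + (1:ℝ) • ![(0:ℝ),-1] = ![1,0] := by
      rw [add_smul_pt]; exact pt_eq_iff.2 ⟨by norm_num, by norm_num⟩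
    rw [hland]; simp [S2]
  -- g = ![0,-1], x = D : step to A
  · have hle : α ≤ 1 := by rw [add_smul_pt, memP2] at hin; norm_num at hin; linarith
    have hαeq : α = 1 := by
      by_contra hne'
      exact hmax 1 (lt_of_le_of_ne hle hne') (by rw [add_smul_pt, memP2]; norm_num)
    subst hαeq
    have hland : ![(0:ℝ),1] + (1:ℝ) • ![(0:ℝ),-1] = ![0,0] := by
      rw [add_smul_pt]; exact pt_eq_iff.2 ⟨by norm_num, by norm_num⟩
    rw [hland]; simp [S2]
  -- g = ![1,-1], x = C : step to B
  · have hle : α ≤ 1 := by rw [add_smul_pt, memP2] at hin; norm_num at hin; linarith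
    have hαeq : α = 1 := by
      by_contra hne'
      exact hmax 1 (lt_of_le_of_ne hle hne') (by rw [add_smul_pt, memP2]; norm_num)
    subst hαeq
    have hland : ![(1:ℝ),1] + (1:ℝ) • ![(1:ℝ),-1] = ![2,0] := by
      rw [add_smul_pt]; exact pt_eq_iff.2 ⟨by norm_num, by norm_num⟩
    rw [hland]; simp [S2]
  -- g = ![1,-1], x = D : step to E
  · have hle : α ≤ 1 := by rw [add_smul_pt, memP2] at hin; norm_num at hin; linarith
    have hαeq : α = 1 := by
      by_contra hne'
      exact hmax 1 (lt_of_le_of_ne hle hne') (by rw [add_smul_pt, memP2]; norm_num)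
    subst hαeq
    have hland : ![(0:ℝ),1] + (1:ℝ) • ![(1:ℝ),-1] = ![1,0] := by
      rw [add_smul_pt]; exact pt_eq_iff.2 ⟨by norm_num, by norm_num⟩
    rw [hland]; simp [S2]
  -- g = ![-1,1], x = B : step to C
  · have hle : α ≤ 1 := by rw [add_smul_pt, memP2] at hin; norm_num at hin; linarith
    have hαeq : α = 1 := by
      by_contra hne'
      exact hmax 1 (lt_of_le_of_ne hle hne') (by rw [add_smul_pt, memP2]; norm_num)
    subst hαeq
    have hland : ![(2:ℝ),0] + (1:ℝ) • ![(-1:ℝ),1] = ![1,1] := by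
      rw [add_smul_pt]; exact pt_eq_iff.2 ⟨by norm_num, by norm_num⟩
    rw [hland]; simp [S2]
  -- g = ![-1,1], x = E : step to D
  · have hle : α ≤ 1 := by rw [add_smul_pt, memP2] at hin; norm_num at hin; linarith
    have hαeq : α = 1 := by
      by_contra hne'
      exact hmax 1 (lt_of_le_of_ne hle hne') (by rw [add_smul_pt, memP2]; norm_num)
    subst hαeq
    have hland : ![(1:ℝ),0] + (1:ℝ) • ![(-1:ℝ),1] = ![0,1] := by
      rw [add_smul_pt]; exact pt_eq_iff.2 ⟨by norm_num, by norm_num⟩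
    rw [hland]; simp [S2]

lemma bounded2 : Bornology.IsBounded (PolyB B2 d2) := by
  apply (Metric.isBounded_closedBall (x := (0 : Fin 2 → ℝ)) (r := 2)).subset
  intro x hx
  rw [memP2] at hx
  rw [Metric.mem_closedBall, dist_zero_right]
  refine pi_norm_le_iff_of_nonneg (by norm_num) |>.2 ?_
  intro i
  fin_cases i
  · show ‖x 0‖ ≤ 2
    rw [Real.norm_eq_abs, abs_le]
    constructor <;> linarith [hx.1, hx.2.1, hx.2.2.1, hx.2.2.2]
  · show ‖x 1‖ ≤ 2
    rw [Real.norm_eq_abs, abs_le]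
    constructor <;> linarith [hx.1, hx.2.1, hx.2.2.1, hx.2.2.2]

lemma icw2 : ∀ (k : ℕ) (y : Fin (k + 1) → Fin 2 → ℝ),
    IsCircuitWalk (PolyB B2 d2) (IsCircuitB B2) y → IsIntegralWalk y := by
  intro k y hw
  have hmemS : ∀ j, y j ∈ S2 := walk_induct hw
    (fun x hx => by rcases ext2 x hx with h | h | h | h <;> simp [S2, h])
    step2
  intro i j
  rcases hmemS i with h | h | h | h | h <;> rw [h] <;> fin_cases j
  · exact ⟨0, by norm_num⟩
  · exact ⟨0, by norm_num⟩
  · exact ⟨2, by norm_num⟩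
  · exact ⟨0, by norm_num⟩
  · exact ⟨1, by norm_num⟩
  · exact ⟨1, by norm_num⟩
  · exact ⟨0, by norm_num⟩
  · exact ⟨1, by norm_num⟩
  · exact ⟨1, by norm_num⟩
  · exact ⟨0, by norm_num⟩

def w2 : Fin 3 → Fin 2 → ℝ := ![![1,1], ![1,0], ![2,0]]

lemma circB2_down : IsCircuitB B2 ![0,-1] := by
  refine ⟨pt_ne_zero_right (by norm_num), ⟨![0,-1], ?_, by decide⟩, ?_⟩
  · intro i; fin_cases i <;> norm_num
  · rintro ⟨y, hy, hss⟩
    have h3 : B2.mulVec y 3 = 0 := by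
      by_contra hc
      have h1 : (3 : Fin 4) ∈ {i | B2.mulVec y i ≠ 0} := hc
      have h2 := hss.1 h1
      simp only [Set.mem_setOf_eq] at h2
      rw [(row2 ![0,-1]).2.2.2] at h2
      norm_num at h2
    rw [(row2 y).2.2.2] at h3
    have hy0 : y 0 = 0 := by linarith
    obtain ⟨j, hj1, hj2⟩ := Set.exists_of_ssubset hss
    simp only [Set.mem_setOf_eq] at hj1 hj2
    apply hy
    fin_cases j
    · replace hj2 : B2.mulVec y 0 = 0 := not_not.mp hj2
      rw [(row2 y).1] at hj2
      funext i; fin_cases i <;> simp [hy0] <;> linarith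
    · replace hj2 : B2.mulVec y 1 = 0 := not_not.mp hj2
      rw [(row2 y).2.1] at hj2
      funext i; fin_cases i <;> simp [hy0] <;> linarith
    · replace hj2 : B2.mulVec y 2 = 0 := not_not.mp hj2
      rw [(row2 y).2.2.1] at hj2
      funext i; fin_cases i <;> simp [hy0, hj2]
    · exfalso
      replace hj1 : B2.mulVec ![0,-1] 3 ≠ 0 := hj1
      rw [(row2 ![0,-1]).2.2.2] at hj1; norm_num at hj1

lemma circB2_right : IsCircuitB B2 ![1,0] := by
  refine ⟨pt_ne_zero_left (by norm_num), ⟨![1,0], ?_, by decide⟩, ?_⟩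
  · intro i; fin_cases i <;> norm_num
  · rintro ⟨y, hy, hss⟩
    have h0 : B2.mulVec y 0 = 0 := by
      by_contra hc
      have h1 : (0 : Fin 4) ∈ {i | B2.mulVec y i ≠ 0} := hc
      have h2 := hss.1 h1
      simp only [Set.mem_setOf_eq] at h2
      rw [(row2 ![1,0]).1] at h2
      norm_num at h2
    rw [(row2 y).1] at h0
    have hy1 : y 1 = 0 := by linarith
    obtain ⟨j, hj1, hj2⟩ := Set.exists_of_ssubset hss
    simp only [Set.mem_setOf_eq] at hj1 hj2
    apply hy
    fin_cases j
    · exfalso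
      replace hj1 : B2.mulVec ![1,0] 0 ≠ 0 := hj1
      rw [(row2 ![1,0]).1] at hj1; norm_num at hj1
    · replace hj2 : B2.mulVec y 1 = 0 := not_not.mp hj2
      rw [(row2 y).2.1] at hj2
      funext i; fin_cases i <;> simp [hy1] <;> linarith
    · exfalso
      replace hj1 : B2.mulVec ![1,0] 2 ≠ 0 := hj1
      rw [(row2 ![1,0]).2.2.1] at hj1; norm_num at hj1
    · replace hj2 : B2.mulVec y 3 = 0 := not_not.mp hj2
      rw [(row2 y).2.2.2] at hj2
      funext i; fin_cases i <;> simp [hy1] <;> linarith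

lemma walk_w2 : IsCircuitWalk (PolyB B2 d2) (IsCircuitB B2) w2 := by
  refine ⟨vC2, vB2, ?_⟩
  intro i
  fin_cases i
  · refine ⟨(memP2 _).2 (by norm_num [w2]), ![0,-1], 1, circB2_down, one_pos, ?_, ?_⟩
    · show (![1,0] : Fin 2 → ℝ) = ![(1:ℝ),1] + (1:ℝ) • ![0,-1]
      rw [add_smul_pt]; symm; exact pt_eq_iff.2 ⟨by norm_num, by norm_num⟩
    · intro β hβ hmem
      have h : ![(1:ℝ),1] + β • ![(0:ℝ),-1] ∈ PolyB B2 d2 := hmem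
      rw [add_smul_pt, memP2] at h
      norm_num at h
      linarith
  · refine ⟨(memP2 _).2 (by norm_num [w2]), ![1,0], 1, circB2_right, one_pos, ?_, ?_⟩
    · show (![2,0] : Fin 2 → ℝ) = ![(1:ℝ),0] + (1:ℝ) • ![1,0]
      rw [add_smul_pt]; symm; exact pt_eq_iff.2 ⟨by norm_num, by norm_num⟩
    · intro β hβ hmem
      have h : ![(1:ℝ),0] + β • ![(1:ℝ),0] ∈ PolyB B2 d2 := hmem
      rw [add_smul_pt, memP2] at h
      norm_num at h
      linarith

lemma notvw_w2 : ¬ IsVertexWalk (PolyB B2 d2) w2 := by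
  intro hv
  refine not_extreme_of_dir (x := ![1,0]) (u := ![1,0]) (pt_ne_zero_left one_ne_zero)
    one_pos ?_ ?_ (hv 1)
  · rw [add_smul_pt, memP2]; norm_num
  · rw [sub_smul_pt, memP2]; norm_num

lemma P2_clause : IsIntegral2DPolytope B2 d2 ∧
    (∀ (k : ℕ) (y : Fin (k + 1) → Fin 2 → ℝ),
      IsCircuitWalk (PolyB B2 d2) (IsCircuitB B2) y → IsIntegralWalk y) ∧
    ∃ (k : ℕ) (y : Fin (k + 1) → Fin 2 → ℝ),
      IsCircuitWalk (PolyB B2 d2) (IsCircuitB B2) y ∧ ¬ IsVertexWalk (PolyB B2 d2) y := by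
  refine ⟨⟨bounded2, ⟨![0,0], (memP2 _).2 (by norm_num)⟩, ?_, ?_, minrep2⟩, icw2, 2, w2, walk_w2, notvw_w2⟩
  · exact affineSpan_top_of_pts ((memP2 _).2 (by norm_num)) ((memP2 _).2 (by norm_num))
      ((memP2 _).2 (by norm_num))
  · intro v hv j
    rcases ext2 v hv with h | h | h | h <;> subst h
    · fin_cases j
      exacts [⟨0, by norm_num⟩, ⟨0, by norm_num⟩]
    · fin_cases j
      exacts [⟨2, by norm_num⟩, ⟨0, by norm_num⟩]
    · fin_cases j
      exacts [⟨1, by norm_num⟩, ⟨1, by norm_num⟩]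
    · fin_cases j
      exacts [⟨0, by norm_num⟩, ⟨1, by norm_num⟩]

/-! ### P₃ : the hexagon with vertices (0,0),(1,0),(2,1),(2,2),(1,2),(0,1) -/

def B3 : Matrix (Fin 6) (Fin 2) ℝ := !![0,-1; 1,-1; 1,0; 0,1; -1,1; -1,0]
def d3 : Fin 6 → ℝ := ![0,1,2,2,1,0]

lemma row3 (x : Fin 2 → ℝ) : B3.mulVec x 0 = -x 1 ∧
    B3.mulVec x 1 = x 0 - x 1 ∧
    B3.mulVec x 2 = x 0 ∧
    B3.mulVec x 3 = x 1 ∧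
    B3.mulVec x 4 = x 1 - x 0 ∧
    B3.mulVec x 5 = -x 0 := by
  refine ⟨?_, ?_, ?_, ?_, ?_, ?_⟩ <;>
    (simp [B3, Matrix.mulVec, dotProduct, Fin.sum_univ_succ, Matrix.vecHead, Matrix.vecTail,
      show ((5:Fin 6)) = Fin.succ 4 from rfl, Matrix.cons_val_succ]; try ring)

lemma d30 : d3 0 = 0 := rfl
lemma d31 : d3 1 = 1 := rfl
lemma d32 : d3 2 = 2 := rfl
lemma d33 : d3 3 = 2 := rfl
lemma d34 : d3 4 = 1 := rfl
lemma d35 : d3 5 = 0 := rfl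

lemma memP3 (x : Fin 2 → ℝ) : x ∈ PolyB B3 d3 ↔
    0 ≤ x 1 ∧ x 0 - x 1 ≤ 1 ∧ x 0 ≤ 2 ∧ x 1 ≤ 2 ∧ x 1 - x 0 ≤ 1 ∧ 0 ≤ x 0 := by
  constructor
  · intro h
    have h0 := h 0; have h1 := h 1; have h2 := h 2
    have h3 := h 3; have h4 := h 4; have h5 := h 5
    rw [(row3 x).1] at h0; rw [(row3 x).2.1] at h1; rw [(row3 x).2.2.1] at h2
    rw [(row3 x).2.2.2.1] at h3; rw [(row3 x).2.2.2.2.1] at h4; rw [(row3 x).2.2.2.2.2] at h5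
    simp only [d30, d31, d32, d33, d34, d35] at h0 h1 h2 h3 h4 h5
    and_intros <;> linarith
  · intro h i
    obtain ⟨h0, h1, h2, h3, h4, h5⟩ := h
    fin_cases i
    · show B3.mulVec x 0 ≤ d3 0; rw [(row3 x).1]; norm_num [d30, d31, d32, d33, d34, d35]; linarith
    · show B3.mulVec x 1 ≤ d3 1; rw [(row3 x).2.1]; norm_num [d30, d31, d32, d33, d34, d35]; linarith
    · show B3.mulVec x 2 ≤ d3 2; rw [(row3 x).2.2.1]; norm_num [d30, d31, d32, d33, d34, d35]; linarith
    · show B3.mulVec x 3 ≤ d3 3; rw [(row3 x).2.2.2.1]; norm_num [d30, d31, d32, d33, d34, d35]; linarith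
    · show B3.mulVec x 4 ≤ d3 4; rw [(row3 x).2.2.2.2.1]; norm_num [d30, d31, d32, d33, d34, d35]; linarith
    · show B3.mulVec x 5 ≤ d3 5; rw [(row3 x).2.2.2.2.2]; norm_num [d30, d31, d32, d33, d34, d35]; linarith


lemma vA3 : ![(0:ℝ),0] ∈ (PolyB B3 d3).extremePoints ℝ := by
  refine vertex_extreme B3 d3 _ ((memP3 _).2 (by norm_num)) 0 5 ?_ ?_ ?_
  · rw [(row3 _).1]; norm_num [d30, d31, d32, d33, d34, d35]
  · rw [(row3 _).2.2.2.2.2]; norm_num [d30, d31, d32, d33, d34, d35]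
  · intro x hx h0 h1
    rw [(row3 x).1] at h0; rw [(row3 x).2.2.2.2.2] at h1
    simp only [d30, d31, d32, d33, d34, d35] at h0 h1
    funext i; fin_cases i <;> simp <;> linarith

lemma vB3 : ![(1:ℝ),0] ∈ (PolyB B3 d3).extremePoints ℝ := by
  refine vertex_extreme B3 d3 _ ((memP3 _).2 (by norm_num)) 0 1 ?_ ?_ ?_
  · rw [(row3 _).1]; norm_num [d30, d31, d32, d33, d34, d35]
  · rw [(row3 _).2.1]; norm_num [d30, d31, d32, d33, d34, d35]
  · intro x hx h0 h1
    rw [(row3 x).1] at h0; rw [(row3 x).2.1] at h1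
    simp only [d30, d31, d32, d33, d34, d35] at h0 h1
    funext i; fin_cases i <;> simp <;> linarith

lemma vC3 : ![(2:ℝ),1] ∈ (PolyB B3 d3).extremePoints ℝ := by
  refine vertex_extreme B3 d3 _ ((memP3 _).2 (by norm_num)) 1 2 ?_ ?_ ?_
  · rw [(row3 _).2.1]; norm_num [d30, d31, d32, d33, d34, d35]
  · rw [(row3 _).2.2.1]; norm_num [d30, d31, d32, d33, d34, d35]
  · intro x hx h0 h1
    rw [(row3 x).2.1] at h0; rw [(row3 x).2.2.1] at h1
    simp only [d30, d31, d32, d33, d34, d35] at h0 h1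
    funext i; fin_cases i <;> simp <;> linarith

lemma vD3 : ![(2:ℝ),2] ∈ (PolyB B3 d3).extremePoints ℝ := by
  refine vertex_extreme B3 d3 _ ((memP3 _).2 (by norm_num)) 2 3 ?_ ?_ ?_
  · rw [(row3 _).2.2.1]; norm_num [d30, d31, d32, d33, d34, d35]
  · rw [(row3 _).2.2.2.1]; norm_num [d30, d31, d32, d33, d34, d35]
  · intro x hx h0 h1
    rw [(row3 x).2.2.1] at h0; rw [(row3 x).2.2.2.1] at h1
    simp only [d30, d31, d32, d33, d34, d35] at h0 h1
    funext i; fin_cases i <;> simp <;> linarith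

lemma vE3 : ![(1:ℝ),2] ∈ (PolyB B3 d3).extremePoints ℝ := by
  refine vertex_extreme B3 d3 _ ((memP3 _).2 (by norm_num)) 3 4 ?_ ?_ ?_
  · rw [(row3 _).2.2.2.1]; norm_num [d30, d31, d32, d33, d34, d35]
  · rw [(row3 _).2.2.2.2.1]; norm_num [d30, d31, d32, d33, d34, d35]
  · intro x hx h0 h1
    rw [(row3 x).2.2.2.1] at h0; rw [(row3 x).2.2.2.2.1] at h1
    simp only [d30, d31, d32, d33, d34, d35] at h0 h1
    funext i; fin_cases i <;> simp <;> linarith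

lemma vF3 : ![(0:ℝ),1] ∈ (PolyB B3 d3).extremePoints ℝ := by
  refine vertex_extreme B3 d3 _ ((memP3 _).2 (by norm_num)) 4 5 ?_ ?_ ?_
  · rw [(row3 _).2.2.2.2.1]; norm_num [d30, d31, d32, d33, d34, d35]
  · rw [(row3 _).2.2.2.2.2]; norm_num [d30, d31, d32, d33, d34, d35]
  · intro x hx h0 h1
    rw [(row3 x).2.2.2.2.1] at h0; rw [(row3 x).2.2.2.2.2] at h1
    simp only [d30, d31, d32, d33, d34, d35] at h0 h1
    funext i; fin_cases i <;> simp <;> linarith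

lemma ext3 (x : Fin 2 → ℝ) (hx : x ∈ (PolyB B3 d3).extremePoints ℝ) :
    x = ![0,0] ∨ x = ![1,0] ∨ x = ![2,1] ∨ x = ![2,2] ∨ x = ![1,2] ∨ x = ![0,1] := by
  obtain ⟨h0, h1, h2, h3, h4, h5⟩ := (memP3 x).1 hx.1
  have hxv : x = ![x 0, x 1] := by funext i; fin_cases i <;> rfl
  rcases eq_or_lt_of_le h0 with hb | hb
  · -- x 1 = 0, so x 0 ∈ [0,1]
    rcases eq_or_lt_of_le h5 with ha | ha
    · left; funext i; fin_cases i <;> simp <;> linarith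
    · rcases eq_or_lt_of_le h1 with hc | hc
      · right; left; funext i; fin_cases i <;> simp <;> linarith
      · -- 0 < x 0 < 1 + x 1, perturb (1,0)
        exfalso
        set ε := min (x 0) (1 - x 0 + x 1) with hεdef
        have hε1 : ε ≤ (x 0) := min_le_left _ _
        have hε2 : ε ≤ (1 - x 0 + x 1) := min_le_right _ _
        have hε : 0 < ε := lt_min (by linarith) (by linarith)
        refine not_extreme_of_dir (u := ![1,0]) (pt_ne_zero_left (by norm_num)) hε ?_ ?_ hx
        · rw [hxv, add_smul_pt, memP3]; norm_num <;> (and_intros <;> linarith)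
        · rw [hxv, sub_smul_pt, memP3]; norm_num <;> (and_intros <;> linarith)
  · rcases eq_or_lt_of_le h3 with hb2 | hb2
    · -- x 1 = 2, so x 0 ∈ [1,2]
      rcases eq_or_lt_of_le h2 with ha2 | ha2
      · right; right; right; left; funext i; fin_cases i <;> simp <;> linarith
      · rcases eq_or_lt_of_le h4 with hc | hc
        · right; right; right; right; left; funext i; fin_cases i <;> simp <;> linarith
        · -- 1 < x 0 < 2, perturb (1,0)
          exfalso
          set ε := min (2 - x 0) (1 - x 1 + x 0) with hεdef
          have hε1 : ε ≤ (2 - x 0) := min_le_left _ _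
          have hε2 : ε ≤ (1 - x 1 + x 0) := min_le_right _ _
          have hε : 0 < ε := lt_min (by linarith) (by linarith)
          refine not_extreme_of_dir (u := ![1,0]) (pt_ne_zero_left (by norm_num)) hε ?_ ?_ hx
          · rw [hxv, add_smul_pt, memP3]; norm_num <;> (and_intros <;> linarith)
          · rw [hxv, sub_smul_pt, memP3]; norm_num <;> (and_intros <;> linarith)
    · -- 0 < x 1 < 2
      rcases eq_or_lt_of_le h5 with ha | ha
      · -- x 0 = 0, so x 1 ≤ 1
        rcases eq_or_lt_of_le h4 with hc | hc
        · right; right; right; right; right; funext i; fin_cases i <;> simp <;> linarith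
        · -- 0 < x 1 < 1, perturb (0,1)
          exfalso
          set ε := min (x 1) (1 - x 1 + x 0) with hεdef
          have hε1 : ε ≤ (x 1) := min_le_left _ _
          have hε2 : ε ≤ (1 - x 1 + x 0) := min_le_right _ _
          have hε : 0 < ε := lt_min (by linarith) (by linarith)
          refine not_extreme_of_dir (u := ![0,1]) (pt_ne_zero_right (by norm_num)) hε ?_ ?_ hx
          · rw [hxv, add_smul_pt, memP3]; norm_num <;> (and_intros <;> linarith)
          · rw [hxv, sub_smul_pt, memP3]; norm_num <;> (and_intros <;> linarith)
      · rcases eq_or_lt_of_le h2 with ha2 | ha2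
        · -- x 0 = 2, so x 1 ≥ 1
          rcases eq_or_lt_of_le h1 with hc | hc
          · right; right; left; funext i; fin_cases i <;> simp <;> linarith
          · -- 1 < x 1 < 2, perturb (0,1)
            exfalso
            set ε := min (2 - x 1) (1 - x 0 + x 1) with hεdef
            have hε1 : ε ≤ (2 - x 1) := min_le_left _ _
            have hε2 : ε ≤ (1 - x 0 + x 1) := min_le_right _ _
            have hε : 0 < ε := lt_min (by linarith) (by linarith)
            refine not_extreme_of_dir (u := ![0,1]) (pt_ne_zero_right (by norm_num)) hε ?_ ?_ hx
            · rw [hxv, add_smul_pt, memP3]; norm_num <;> (and_intros <;> linarith)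
            · rw [hxv, sub_smul_pt, memP3]; norm_num <;> (and_intros <;> linarith)
        · -- 0 < x 0 < 2, 0 < x 1 < 2
          rcases eq_or_lt_of_le h1 with hc | hc
          · -- x 0 - x 1 = 1, perturb (1,1)
            exfalso
            set ε := min (x 1) (2 - x 0) with hεdef
            have hε1 : ε ≤ (x 1) := min_le_left _ _
            have hε2 : ε ≤ (2 - x 0) := min_le_right _ _
            have hε : 0 < ε := lt_min (by linarith) (by linarith)
            refine not_extreme_of_dir (u := ![1,1]) (pt_ne_zero_left (by norm_num)) hε ?_ ?_ hx
            · rw [hxv, add_smul_pt, memP3]; norm_num <;> (and_intros <;> linarith)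
            · rw [hxv, sub_smul_pt, memP3]; norm_num <;> (and_intros <;> linarith)
          · rcases eq_or_lt_of_le h4 with hd | hd
            · -- x 1 - x 0 = 1, perturb (1,1)
              exfalso
              set ε := min (x 0) (2 - x 1) with hεdef
              have hε1 : ε ≤ (x 0) := min_le_left _ _
              have hε2 : ε ≤ (2 - x 1) := min_le_right _ _
              have hε : 0 < ε := lt_min (by linarith) (by linarith)
              refine not_extreme_of_dir (u := ![1,1]) (pt_ne_zero_left (by norm_num)) hε ?_ ?_ hx
              · rw [hxv, add_smul_pt, memP3]; norm_num <;> (and_intros <;> linarith)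
              · rw [hxv, sub_smul_pt, memP3]; norm_num <;> (and_intros <;> linarith)
            · -- interior-ish, perturb (1,0)
              exfalso
              set ε := min (min (x 0) (2 - x 0)) (min (1 - x 0 + x 1) (1 - x 1 + x 0)) with hεdef
              have hε1 : ε ≤ x 0 := le_trans (min_le_left _ _) (min_le_left _ _)
              have hε2 : ε ≤ 2 - x 0 := le_trans (min_le_left _ _) (min_le_right _ _)
              have hε3 : ε ≤ 1 - x 0 + x 1 := le_trans (min_le_right _ _) (min_le_left _ _)
              have hε4 : ε ≤ 1 - x 1 + x 0 := le_trans (min_le_right _ _) (min_le_right _ _)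
              have hε : 0 < ε := lt_min (lt_min (by linarith) (by linarith)) (lt_min (by linarith) (by linarith))
              refine not_extreme_of_dir (u := ![1,0]) (pt_ne_zero_left (by norm_num)) hε ?_ ?_ hx
              · rw [hxv, add_smul_pt, memP3]; norm_num <;> (and_intros <;> linarith)
              · rw [hxv, sub_smul_pt, memP3]; norm_num <;> (and_intros <;> linarith)

lemma seg3_0 : {x ∈ PolyB B3 d3 | B3.mulVec x 0 = d3 0} =
    segment ℝ ![0,0] ![1,0] := by
  ext x
  simp only [Set.mem_sep_iff, Set.mem_setOf_eq]
  rw [memP3, (row3 x).1]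
  constructor
  · rintro ⟨⟨h0, h1, h2, h3, h4, h5⟩, he⟩
    simp only [d30, d31, d32, d33, d34, d35] at he
    refine ⟨1 - x 0, x 0, by linarith, by linarith, by ring, ?_⟩
    funext i; fin_cases i <;> simp <;> linarith
  · rintro ⟨u, v, hu, hv, huv, rfl⟩
    have hx : u • ![(0:ℝ),0] + v • ![(1:ℝ),0] = ![v, 0] := by
      funext i; fin_cases i <;> simp <;> ring
    rw [hx]
    norm_num [d30, d31, d32, d33, d34, d35]
    and_intros <;> linarith

lemma seg3_1 : {x ∈ PolyB B3 d3 | B3.mulVec x 1 = d3 1} =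
    segment ℝ ![1,0] ![2,1] := by
  ext x
  simp only [Set.mem_sep_iff, Set.mem_setOf_eq]
  rw [memP3, (row3 x).2.1]
  constructor
  · rintro ⟨⟨h0, h1, h2, h3, h4, h5⟩, he⟩
    simp only [d30, d31, d32, d33, d34, d35] at he
    refine ⟨1 - x 1, x 1, by linarith, by linarith, by ring, ?_⟩
    funext i; fin_cases i <;> simp <;> linarith
  · rintro ⟨u, v, hu, hv, huv, rfl⟩
    have hx : u • ![(1:ℝ),0] + v • ![(2:ℝ),1] = ![u + 2*v, v] := by
      funext i; fin_cases i <;> simp <;> ring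
    rw [hx]
    norm_num [d30, d31, d32, d33, d34, d35]
    and_intros <;> linarith

lemma seg3_2 : {x ∈ PolyB B3 d3 | B3.mulVec x 2 = d3 2} =
    segment ℝ ![2,1] ![2,2] := by
  ext x
  simp only [Set.mem_sep_iff, Set.mem_setOf_eq]
  rw [memP3, (row3 x).2.2.1]
  constructor
  · rintro ⟨⟨h0, h1, h2, h3, h4, h5⟩, he⟩
    simp only [d30, d31, d32, d33, d34, d35] at he
    refine ⟨2 - x 1, x 1 - 1, by linarith, by linarith, by ring, ?_⟩
    funext i; fin_cases i <;> simp <;> linarith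
  · rintro ⟨u, v, hu, hv, huv, rfl⟩
    have hx : u • ![(2:ℝ),1] + v • ![(2:ℝ),2] = ![2*u + 2*v, u + 2*v] := by
      funext i; fin_cases i <;> simp <;> ring
    rw [hx]
    norm_num [d30, d31, d32, d33, d34, d35]
    and_intros <;> linarith

lemma seg3_3 : {x ∈ PolyB B3 d3 | B3.mulVec x 3 = d3 3} =
    segment ℝ ![1,2] ![2,2] := by
  ext x
  simp only [Set.mem_sep_iff, Set.mem_setOf_eq]
  rw [memP3, (row3 x).2.2.2.1]
  constructor
  · rintro ⟨⟨h0, h1, h2, h3, h4, h5⟩, he⟩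
    simp only [d30, d31, d32, d33, d34, d35] at he
    refine ⟨2 - x 0, x 0 - 1, by linarith, by linarith, by ring, ?_⟩
    funext i; fin_cases i <;> simp <;> linarith
  · rintro ⟨u, v, hu, hv, huv, rfl⟩
    have hx : u • ![(1:ℝ),2] + v • ![(2:ℝ),2] = ![u + 2*v, 2*u + 2*v] := by
      funext i; fin_cases i <;> simp <;> ring
    rw [hx]
    norm_num [d30, d31, d32, d33, d34, d35]
    and_intros <;> linarith

lemma seg3_4 : {x ∈ PolyB B3 d3 | B3.mulVec x 4 = d3 4} =
    segment ℝ ![0,1] ![1,2] := by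
  ext x
  simp only [Set.mem_sep_iff, Set.mem_setOf_eq]
  rw [memP3, (row3 x).2.2.2.2.1]
  constructor
  · rintro ⟨⟨h0, h1, h2, h3, h4, h5⟩, he⟩
    simp only [d30, d31, d32, d33, d34, d35] at he
    refine ⟨1 - x 0, x 0, by linarith, by linarith, by ring, ?_⟩
    funext i; fin_cases i <;> simp <;> linarith
  · rintro ⟨u, v, hu, hv, huv, rfl⟩
    have hx : u • ![(0:ℝ),1] + v • ![(1:ℝ),2] = ![v, u + 2*v] := by
      funext i; fin_cases i <;> simp <;> ring
    rw [hx]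
    norm_num [d30, d31, d32, d33, d34, d35]
    and_intros <;> linarith

lemma seg3_5 : {x ∈ PolyB B3 d3 | B3.mulVec x 5 = d3 5} =
    segment ℝ ![0,0] ![0,1] := by
  ext x
  simp only [Set.mem_sep_iff, Set.mem_setOf_eq]
  rw [memP3, (row3 x).2.2.2.2.2]
  constructor
  · rintro ⟨⟨h0, h1, h2, h3, h4, h5⟩, he⟩
    simp only [d30, d31, d32, d33, d34, d35] at he
    refine ⟨1 - x 1, x 1, by linarith, by linarith, by ring, ?_⟩
    funext i; fin_cases i <;> simp <;> linarith
  · rintro ⟨u, v, hu, hv, huv, rfl⟩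
    have hx : u • ![(0:ℝ),0] + v • ![(0:ℝ),1] = ![0, v] := by
      funext i; fin_cases i <;> simp <;> ring
    rw [hx]
    norm_num [d30, d31, d32, d33, d34, d35]
    and_intros <;> linarith

lemma minrep3 : IsMinimalRep B3 d3 := by
  intro i
  fin_cases i
  · exact facet_of_seg B3 d3 0 _ _ seg3_0 (by intro h; have := congrFun h 0; norm_num at this)
  · exact facet_of_seg B3 d3 1 _ _ seg3_1 (by intro h; have := congrFun h 0; norm_num at this)
  · exact facet_of_seg B3 d3 2 _ _ seg3_2 (by intro h; have := congrFun h 1; norm_num at this)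
  · exact facet_of_seg B3 d3 3 _ _ seg3_3 (by intro h; have := congrFun h 0; norm_num at this)
  · exact facet_of_seg B3 d3 4 _ _ seg3_4 (by intro h; have := congrFun h 0; norm_num at this)
  · exact facet_of_seg B3 d3 5 _ _ seg3_5 (by intro h; have := congrFun h 1; norm_num at this)

lemma circ3 (g : Fin 2 → ℝ) (h : IsCircuitB B3 g) :
    g = ![1,0] ∨ g = ![-1,0] ∨ g = ![0,1] ∨ g = ![0,-1] ∨ g = ![1,1] ∨ g = ![-1,-1] := by
  obtain ⟨hne, ⟨gz, hgz, hgcd⟩, hmin⟩ := h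
  have hgv : g = ![(gz 0 : ℝ), (gz 1 : ℝ)] := by
    funext i; fin_cases i
    · exact hgz 0
    · exact hgz 1
  have key : g 0 = 0 ∨ g 1 = 0 ∨ g 0 - g 1 = 0 := by
    by_contra hA
    push_neg at hA
    obtain ⟨h1, h2, h3⟩ := hA
    apply hmin
    refine ⟨![1,0], pt_ne_zero_left one_ne_zero, ?_⟩
    have hsub : {i | B3.mulVec ![1,0] i ≠ 0} ⊆ {i | B3.mulVec g i ≠ 0} := by
      intro i _
      simp only [Set.mem_setOf_eq]
      fin_cases i
      · show B3.mulVec g 0 ≠ 0; rw [(row3 g).1]; simpa using h2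
      · show B3.mulVec g 1 ≠ 0; rw [(row3 g).2.1]; exact sub_ne_zero.mpr (fun hh => h3 (by rw [hh]; ring))
      · show B3.mulVec g 2 ≠ 0; rw [(row3 g).2.2.1]; exact h1
      · show B3.mulVec g 3 ≠ 0; rw [(row3 g).2.2.2.1]; exact h2
      · show B3.mulVec g 4 ≠ 0; rw [(row3 g).2.2.2.2.1]; exact sub_ne_zero.mpr (fun hh => h3 (by rw [← hh]; ring))
      · show B3.mulVec g 5 ≠ 0; rw [(row3 g).2.2.2.2.2]; simpa using h1
    refine (Set.ssubset_iff_of_subset hsub).2 ⟨0, ?_, ?_⟩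
    · simp only [Set.mem_setOf_eq]; rw [(row3 g).1]; simpa using h2
    · simp only [Set.mem_setOf_eq]; rw [(row3 ![1,0]).1]; norm_num
  have c0 : g 0 = (gz 0 : ℝ) := hgz 0
  have c1 : g 1 = (gz 1 : ℝ) := hgz 1
  rcases key with hk | hk | hk
  · have hz0 : gz 0 = 0 := by exact_mod_cast c0 ▸ hk
    rcases unit_of_dvd_all gz hgcd (gz 1) (by
        intro i; fin_cases i
        · show gz 1 ∣ gz 0; rw [hz0]; exact dvd_zero _
        · exact dvd_refl _) with hz1 | hz1
    · right; right; left; rw [hgv, hz0, hz1]; norm_num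
    · right; right; right; left; rw [hgv, hz0, hz1]; norm_num
  · have hz1 : gz 1 = 0 := by exact_mod_cast c1 ▸ hk
    rcases unit_of_dvd_all gz hgcd (gz 0) (by
        intro i; fin_cases i
        · exact dvd_refl _
        · show gz 0 ∣ gz 1; rw [hz1]; exact dvd_zero _) with hz0 | hz0
    · left; rw [hgv, hz0, hz1]; norm_num
    · right; left; rw [hgv, hz0, hz1]; norm_num
  · have hz : gz 0 = gz 1 := by
      have : (gz 0 : ℝ) = (gz 1 : ℝ) := by rw [← c0, ← c1]; linarith [hk]
      exact_mod_cast this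
    rcases unit_of_dvd_all gz hgcd (gz 0) (by
        intro i; fin_cases i
        · exact dvd_refl _
        · show gz 0 ∣ gz 1; rw [hz]) with hz0 | hz0
    · right; right; right; right; left
      rw [hgv, hz0, show gz 1 = 1 by omega]; norm_num
    · right; right; right; right; right
      rw [hgv, hz0, show gz 1 = -1 by omega]; norm_num


def S3 : Set (Fin 2 → ℝ) := {![0,0], ![1,0], ![2,1], ![2,2], ![1,2], ![0,1]}

lemma step3 : ∀ x ∈ S3, ∀ (g : Fin 2 → ℝ) (α : ℝ), IsCircuitB B3 g → 0 < α →
    x + α • g ∈ PolyB B3 d3 → (∀ β, α < β → x + β • g ∉ PolyB B3 d3) →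
    x + α • g ∈ S3 := by
  intro x hx g α hg hα hin hmax
  simp only [S3, Set.mem_insert_iff, Set.mem_singleton_iff] at hx
  rcases circ3 g hg with rfl | rfl | rfl | rfl | rfl | rfl <;>
    rcases hx with rfl | rfl | rfl | rfl | rfl | rfl
  all_goals try (exfalso; rw [add_smul_pt, memP3] at hin; norm_num at hin; linarith)
  -- g = ![1,0], x = A : step to B
  · have hle : α ≤ 1 := by rw [add_smul_pt, memP3] at hin; norm_num at hin; linarith
    have hαeq : α = 1 := by
      by_contra hne'
      exact hmax 1 (lt_of_le_of_ne hle hne') (by rw [add_smul_pt, memP3]; norm_num)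
    subst hαeq
    have hland : ![(0:ℝ),0] + (1:ℝ) • ![(1:ℝ),0] = ![1,0] := by
      rw [add_smul_pt]; exact pt_eq_iff.2 ⟨by norm_num, by norm_num⟩
    rw [hland]; simp [S3]
  -- g = ![1,0], x = E : step to D
  · have hle : α ≤ 1 := by rw [add_smul_pt, memP3] at hin; norm_num at hin; linarith
    have hαeq : α = 1 := by
      by_contra hne'
      exact hmax 1 (lt_of_le_of_ne hle hne') (by rw [add_smul_pt, memP3]; norm_num)
    subst hαeq
    have hland : ![(1:ℝ),2] + (1:ℝ) • ![(1:ℝ),0] = ![2,2] := by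
      rw [add_smul_pt]; exact pt_eq_iff.2 ⟨by norm_num, by norm_num⟩
    rw [hland]; simp [S3]
  -- g = ![1,0], x = F : step to C
  · have hle : α ≤ 2 := by rw [add_smul_pt, memP3] at hin; norm_num at hin; linarith
    have hαeq : α = 2 := by
      by_contra hne'
      exact hmax 2 (lt_of_le_of_ne hle hne') (by rw [add_smul_pt, memP3]; norm_num)
    subst hαeq
    have hland : ![(0:ℝ),1] + (2:ℝ) • ![(1:ℝ),0] = ![2,1] := by
      rw [add_smul_pt]; exact pt_eq_iff.2 ⟨by norm_num, by norm_num⟩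
    rw [hland]; simp [S3]
  -- g = ![-1,0], x = B : step to A
  · have hle : α ≤ 1 := by rw [add_smul_pt, memP3] at hin; norm_num at hin; linarith
    have hαeq : α = 1 := by
      by_contra hne'
      exact hmax 1 (lt_of_le_of_ne hle hne') (by rw [add_smul_pt, memP3]; norm_num)
    subst hαeq
    have hland : ![(1:ℝ),0] + (1:ℝ) • ![(-1:ℝ),0] = ![0,0] := by
      rw [add_smul_pt]; exact pt_eq_iff.2 ⟨by norm_num, by norm_num⟩
    rw [hland]; simp [S3]
  -- g = ![-1,0], x = C : step to F
  · have hle : α ≤ 2 := by rw [add_smul_pt, memP3] at hin; norm_num at hin; linarith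
    have hαeq : α = 2 := by
      by_contra hne'
      exact hmax 2 (lt_of_le_of_ne hle hne') (by rw [add_smul_pt, memP3]; norm_num)
    subst hαeq
    have hland : ![(2:ℝ),1] + (2:ℝ) • ![(-1:ℝ),0] = ![0,1] := by
      rw [add_smul_pt]; exact pt_eq_iff.2 ⟨by norm_num, by norm_num⟩
    rw [hland]; simp [S3]
  -- g = ![-1,0], x = D : step to E
  · have hle : α ≤ 1 := by rw [add_smul_pt, memP3] at hin; norm_num at hin; linarith
    have hαeq : α = 1 := by
      by_contra hne'
      exact hmax 1 (lt_of_le_of_ne hle hne') (by rw [add_smul_pt, memP3]; norm_num)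
    subst hαeq
    have hland : ![(2:ℝ),2] + (1:ℝ) • ![(-1:ℝ),0] = ![1,2] := by
      rw [add_smul_pt]; exact pt_eq_iff.2 ⟨by norm_num, by norm_num⟩
    rw [hland]; simp [S3]
  -- g = ![0,1], x = A : step to F
  · have hle : α ≤ 1 := by rw [add_smul_pt, memP3] at hin; norm_num at hin; linarith
    have hαeq : α = 1 := by
      by_contra hne'
      exact hmax 1 (lt_of_le_of_ne hle hne') (by rw [add_smul_pt, memP3]; norm_num)
    subst hαeq
    have hland : ![(0:ℝ),0] + (1:ℝ) • ![(0:ℝ),1] = ![0,1] := by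
      rw [add_smul_pt]; exact pt_eq_iff.2 ⟨by norm_num, by norm_num⟩
    rw [hland]; simp [S3]
  -- g = ![0,1], x = B : step to E
  · have hle : α ≤ 2 := by rw [add_smul_pt, memP3] at hin; norm_num at hin; linarith
    have hαeq : α = 2 := by
      by_contra hne'
      exact hmax 2 (lt_of_le_of_ne hle hne') (by rw [add_smul_pt, memP3]; norm_num)
    subst hαeq
    have hland : ![(1:ℝ),0] + (2:ℝ) • ![(0:ℝ),1] = ![1,2] := by
      rw [add_smul_pt]; exact pt_eq_iff.2 ⟨by norm_num, by norm_num⟩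
    rw [hland]; simp [S3]
  -- g = ![0,1], x = C : step to D
  · have hle : α ≤ 1 := by rw [add_smul_pt, memP3] at hin; norm_num at hin; linarith
    have hαeq : α = 1 := by
      by_contra hne'
      exact hmax 1 (lt_of_le_of_ne hle hne') (by rw [add_smul_pt, memP3]; norm_num)
    subst hαeq
    have hland : ![(2:ℝ),1] + (1:ℝ) • ![(0:ℝ),1] = ![2,2] := by
      rw [add_smul_pt]; exact pt_eq_iff.2 ⟨by norm_num, by norm_num⟩
    rw [hland]; simp [S3]
  -- g = ![0,-1], x = D : step to C
  · have hle : α ≤ 1 := by rw [add_smul_pt, memP3] at hin; norm_num at hin; linarith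
    have hαeq : α = 1 := by
      by_contra hne'
      exact hmax 1 (lt_of_le_of_ne hle hne') (by rw [add_smul_pt, memP3]; norm_num)
    subst hαeq
    have hland : ![(2:ℝ),2] + (1:ℝ) • ![(0:ℝ),-1] = ![2,1] := by
      rw [add_smul_pt]; exact pt_eq_iff.2 ⟨by norm_num, by norm_num⟩
    rw [hland]; simp [S3]
  -- g = ![0,-1], x = E : step to B
  · have hle : α ≤ 2 := by rw [add_smul_pt, memP3] at hin; norm_num at hin; linarith
    have hαeq : α = 2 := by
      by_contra hne'
      exact hmax 2 (lt_of_le_of_ne hle hne') (by rw [add_smul_pt, memP3]; norm_num)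
    subst hαeq
    have hland : ![(1:ℝ),2] + (2:ℝ) • ![(0:ℝ),-1] = ![1,0] := by
      rw [add_smul_pt]; exact pt_eq_iff.2 ⟨by norm_num, by norm_num⟩
    rw [hland]; simp [S3]
  -- g = ![0,-1], x = F : step to A
  · have hle : α ≤ 1 := by rw [add_smul_pt, memP3] at hin; norm_num at hin; linarith
    have hαeq : α = 1 := by
      by_contra hne'
      exact hmax 1 (lt_of_le_of_ne hle hne') (by rw [add_smul_pt, memP3]; norm_num)
    subst hαeq
    have hland : ![(0:ℝ),1] + (1:ℝ) • ![(0:ℝ),-1] = ![0,0] := by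
      rw [add_smul_pt]; exact pt_eq_iff.2 ⟨by norm_num, by norm_num⟩
    rw [hland]; simp [S3]
  -- g = ![1,1], x = A : step to D
  · have hle : α ≤ 2 := by rw [add_smul_pt, memP3] at hin; norm_num at hin; linarith
    have hαeq : α = 2 := by
      by_contra hne'
      exact hmax 2 (lt_of_le_of_ne hle hne') (by rw [add_smul_pt, memP3]; norm_num)
    subst hαeq
    have hland : ![(0:ℝ),0] + (2:ℝ) • ![(1:ℝ),1] = ![2,2] := by
      rw [add_smul_pt]; exact pt_eq_iff.2 ⟨by norm_num, by norm_num⟩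
    rw [hland]; simp [S3]
  -- g = ![1,1], x = B : step to C
  · have hle : α ≤ 1 := by rw [add_smul_pt, memP3] at hin; norm_num at hin; linarith
    have hαeq : α = 1 := by
      by_contra hne'
      exact hmax 1 (lt_of_le_of_ne hle hne') (by rw [add_smul_pt, memP3]; norm_num)
    subst hαeq
    have hland : ![(1:ℝ),0] + (1:ℝ) • ![(1:ℝ),1] = ![2,1] := by
      rw [add_smul_pt]; exact pt_eq_iff.2 ⟨by norm_num, by norm_num⟩
    rw [hland]; simp [S3]
  -- g = ![1,1], x = F : step to E
  · have hle : α ≤ 1 := by rw [add_smul_pt, memP3] at hin; norm_num at hin; linarith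
    have hαeq : α = 1 := by
      by_contra hne'
      exact hmax 1 (lt_of_le_of_ne hle hne') (by rw [add_smul_pt, memP3]; norm_num)
    subst hαeq
    have hland : ![(0:ℝ),1] + (1:ℝ) • ![(1:ℝ),1] = ![1,2] := by
      rw [add_smul_pt]; exact pt_eq_iff.2 ⟨by norm_num, by norm_num⟩
    rw [hland]; simp [S3]
  -- g = ![-1,-1], x = C : step to B
  · have hle : α ≤ 1 := by rw [add_smul_pt, memP3] at hin; norm_num at hin; linarith
    have hαeq : α = 1 := by
      by_contra hne'
      exact hmax 1 (lt_of_le_of_ne hle hne') (by rw [add_smul_pt, memP3]; norm_num)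
    subst hαeq
    have hland : ![(2:ℝ),1] + (1:ℝ) • ![(-1:ℝ),-1] = ![1,0] := by
      rw [add_smul_pt]; exact pt_eq_iff.2 ⟨by norm_num, by norm_num⟩
    rw [hland]; simp [S3]
  -- g = ![-1,-1], x = D : step to A
  · have hle : α ≤ 2 := by rw [add_smul_pt, memP3] at hin; norm_num at hin; linarith
    have hαeq : α = 2 := by
      by_contra hne'
      exact hmax 2 (lt_of_le_of_ne hle hne') (by rw [add_smul_pt, memP3]; norm_num)
    subst hαeq
    have hland : ![(2:ℝ),2] + (2:ℝ) • ![(-1:ℝ),-1] = ![0,0] := by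
      rw [add_smul_pt]; exact pt_eq_iff.2 ⟨by norm_num, by norm_num⟩
    rw [hland]; simp [S3]
  -- g = ![-1,-1], x = E : step to F
  · have hle : α ≤ 1 := by rw [add_smul_pt, memP3] at hin; norm_num at hin; linarith
    have hαeq : α = 1 := by
      by_contra hne'
      exact hmax 1 (lt_of_le_of_ne hle hne') (by rw [add_smul_pt, memP3]; norm_num)
    subst hαeq
    have hland : ![(1:ℝ),2] + (1:ℝ) • ![(-1:ℝ),-1] = ![0,1] := by
      rw [add_smul_pt]; exact pt_eq_iff.2 ⟨by norm_num, by norm_num⟩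
    rw [hland]; simp [S3]

lemma circB3_diag : IsCircuitB B3 ![1,1] := by
  refine ⟨pt_ne_zero_left (by norm_num), ⟨![1,1], ?_, by decide⟩, ?_⟩
  · intro i; fin_cases i <;> norm_num
  · rintro ⟨y, hy, hss⟩
    have h1 : B3.mulVec y 1 = 0 := by
      by_contra hc
      have hmem : (1 : Fin 6) ∈ {i | B3.mulVec y i ≠ 0} := hc
      have h2 := hss.1 hmem
      simp only [Set.mem_setOf_eq] at h2
      rw [(row3 ![1,1]).2.1] at h2
      norm_num at h2
    rw [(row3 y).2.1] at h1
    obtain ⟨j, hj1, hj2⟩ := Set.exists_of_ssubset hss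
    simp only [Set.mem_setOf_eq] at hj1 hj2
    apply hy
    fin_cases j
    · replace hj2 : B3.mulVec y 0 = 0 := not_not.mp hj2
      rw [(row3 y).1] at hj2
      funext i; fin_cases i <;> simp <;> linarith
    · exfalso
      replace hj1 : B3.mulVec ![1,1] 1 ≠ 0 := hj1
      rw [(row3 ![1,1]).2.1] at hj1; norm_num at hj1
    · replace hj2 : B3.mulVec y 2 = 0 := not_not.mp hj2
      rw [(row3 y).2.2.1] at hj2
      funext i; fin_cases i <;> simp <;> linarith
    · replace hj2 : B3.mulVec y 3 = 0 := not_not.mp hj2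
      rw [(row3 y).2.2.2.1] at hj2
      funext i; fin_cases i <;> simp <;> linarith
    · exfalso
      replace hj1 : B3.mulVec ![1,1] 4 ≠ 0 := hj1
      rw [(row3 ![1,1]).2.2.2.2.1] at hj1; norm_num at hj1
    · replace hj2 : B3.mulVec y 5 = 0 := not_not.mp hj2
      rw [(row3 y).2.2.2.2.2] at hj2
      funext i; fin_cases i <;> simp <;> linarith

lemma vcw3 : ∀ (k : ℕ) (y : Fin (k + 1) → Fin 2 → ℝ),
    IsCircuitWalk (PolyB B3 d3) (IsCircuitB B3) y → IsVertexWalk (PolyB B3 d3) y := by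
  intro k y hw
  have hmemS : ∀ j, y j ∈ S3 := walk_induct hw
    (fun x hx => by rcases ext3 x hx with h | h | h | h | h | h <;> simp [S3, h])
    step3
  intro i
  rcases hmemS i with h | h | h | h | h | h <;> rw [h]
  exacts [vA3, vB3, vC3, vD3, vE3, vF3]

def w3 : Fin 2 → Fin 2 → ℝ := ![![0,0], ![2,2]]

lemma walk_w3 : IsCircuitWalk (PolyB B3 d3) (IsCircuitB B3) w3 := by
  refine ⟨vA3, vD3, ?_⟩
  intro i
  fin_cases i
  refine ⟨(memP3 _).2 (by norm_num [w3]), ![1,1], 2, circB3_diag, two_pos, ?_, ?_⟩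
  · show (![2,2] : Fin 2 → ℝ) = ![(0:ℝ),0] + (2:ℝ) • ![1,1]
    rw [add_smul_pt]; symm; exact pt_eq_iff.2 ⟨by norm_num, by norm_num⟩
  · intro β hβ hmem
    have h : ![(0:ℝ),0] + β • ![(1:ℝ),1] ∈ PolyB B3 d3 := hmem
    rw [add_smul_pt, memP3] at h
    norm_num at h
    linarith

lemma notew_w3 : ¬ IsEdgeWalk (PolyB B3 d3) w3 := by
  intro h
  have h0 := (h 0).2
  have hseg : IsExtreme ℝ (PolyB B3 d3) (segment ℝ ![0,0] ![2,2]) := h0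
  have hm1 : ![(2:ℝ),1] ∈ PolyB B3 d3 := (memP3 _).2 (by norm_num)
  have hm2 : ![(0:ℝ),1] ∈ PolyB B3 d3 := (memP3 _).2 (by norm_num)
  have hz : ![(1:ℝ),1] ∈ segment ℝ ![0,0] ![2,2] := by
    refine ⟨1/2, 1/2, by norm_num, by norm_num, by norm_num, ?_⟩
    funext i; fin_cases i <;> norm_num
  have hopen : ![(1:ℝ),1] ∈ openSegment ℝ ![2,1] ![0,1] := by
    refine ⟨1/2, 1/2, by norm_num, by norm_num, by norm_num, ?_⟩
    funext i; fin_cases i <;> norm_num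
  have hcon := hseg.2 hm1 hm2 hz hopen
  obtain ⟨u, v, hu, hv, huv, hcomb⟩ := hcon
  have e0 := congrFun hcomb 0
  have e1 := congrFun hcomb 1
  norm_num at e0 e1
  linarith

lemma P3_clause : IsIntegral2DPolytope B3 d3 ∧
    (∀ (k : ℕ) (y : Fin (k + 1) → Fin 2 → ℝ),
      IsCircuitWalk (PolyB B3 d3) (IsCircuitB B3) y → IsVertexWalk (PolyB B3 d3) y) ∧
    ∃ (k : ℕ) (y : Fin (k + 1) → Fin 2 → ℝ),
      IsCircuitWalk (PolyB B3 d3) (IsCircuitB B3) y ∧ ¬ IsEdgeWalk (PolyB B3 d3) y := by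
  refine ⟨⟨?_, ⟨![0,0], (memP3 _).2 (by norm_num)⟩, ?_, ?_, minrep3⟩, vcw3, 1, w3, walk_w3, notew_w3⟩
  · apply (Metric.isBounded_closedBall (x := (0 : Fin 2 → ℝ)) (r := 2)).subset
    intro x hx
    rw [memP3] at hx
    rw [Metric.mem_closedBall, dist_zero_right]
    refine pi_norm_le_iff_of_nonneg (by norm_num) |>.2 ?_
    intro i
    fin_cases i
    · show ‖x 0‖ ≤ 2
      rw [Real.norm_eq_abs, abs_le]
      constructor <;> linarith [hx.1, hx.2.1, hx.2.2.1, hx.2.2.2.1, hx.2.2.2.2.1, hx.2.2.2.2.2]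
    · show ‖x 1‖ ≤ 2
      rw [Real.norm_eq_abs, abs_le]
      constructor <;> linarith [hx.1, hx.2.1, hx.2.2.1, hx.2.2.2.1, hx.2.2.2.2.1, hx.2.2.2.2.2]
  · exact affineSpan_top_of_pts ((memP3 _).2 (by norm_num)) ((memP3 _).2 (by norm_num))
      ((memP3 _).2 (by norm_num))
  · intro v hv j
    rcases ext3 v hv with h | h | h | h | h | h <;> subst h
    · fin_cases j
      exacts [⟨0, by norm_num⟩, ⟨0, by norm_num⟩]
    · fin_cases j
      exacts [⟨1, by norm_num⟩, ⟨0, by norm_num⟩]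
    · fin_cases j
      exacts [⟨2, by norm_num⟩, ⟨1, by norm_num⟩]
    · fin_cases j
      exacts [⟨2, by norm_num⟩, ⟨2, by norm_num⟩]
    · fin_cases j
      exacts [⟨1, by norm_num⟩, ⟨2, by norm_num⟩]
    · fin_cases j
      exacts [⟨0, by norm_num⟩, ⟨1, by norm_num⟩]

/-! ### P₁ : the trapezoid with vertices (0,0), (3,0), (1,1), (0,1) -/

def B1 : Matrix (Fin 4) (Fin 2) ℝ := !![0,-1; 1,2; 0,1; -1,0]
def d1 : Fin 4 → ℝ := ![0,3,1,0]

lemma row1 (x : Fin 2 → ℝ) : B1.mulVec x 0 = -x 1 ∧ B1.mulVec x 1 = x 0 + 2*x 1 ∧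
    B1.mulVec x 2 = x 1 ∧ B1.mulVec x 3 = -x 0 := by
  refine ⟨?_, ?_, ?_, ?_⟩ <;> (simp [B1, Matrix.mulVec, dotProduct, Fin.sum_univ_succ]; try ring)

lemma memP1 (x : Fin 2 → ℝ) : x ∈ PolyB B1 d1 ↔
    0 ≤ x 1 ∧ x 0 + 2*x 1 ≤ 3 ∧ x 1 ≤ 1 ∧ 0 ≤ x 0 := by
  constructor
  · intro h
    have h0 := h 0; have h1 := h 1; have h2 := h 2; have h3 := h 3
    rw [(row1 x).1] at h0; rw [(row1 x).2.1] at h1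
    rw [(row1 x).2.2.1] at h2; rw [(row1 x).2.2.2] at h3
    simp [d1] at h0 h1 h2 h3
    and_intros <;> linarith
  · intro h i
    obtain ⟨h0, h1, h2, h3⟩ := h
    fin_cases i
    · show B1.mulVec x 0 ≤ d1 0; rw [(row1 x).1]; simp [d1]; linarith
    · show B1.mulVec x 1 ≤ d1 1; rw [(row1 x).2.1]; simp [d1]; linarith
    · show B1.mulVec x 2 ≤ d1 2; rw [(row1 x).2.2.1]; simp [d1]; linarith
    · show B1.mulVec x 3 ≤ d1 3; rw [(row1 x).2.2.2]; simp [d1]; linarith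


lemma vA1 : ![(0:ℝ),0] ∈ (PolyB B1 d1).extremePoints ℝ := by
  refine vertex_extreme B1 d1 _ ((memP1 _).2 (by norm_num)) 0 3 ?_ ?_ ?_
  · rw [(row1 _).1]; norm_num [d1]
  · rw [(row1 _).2.2.2]; norm_num [d1, Matrix.cons_val_two, Matrix.cons_val_three]
  · intro x hx h0 h1
    rw [(row1 x).1] at h0; rw [(row1 x).2.2.2] at h1
    simp [d1] at h0 h1
    funext i; fin_cases i <;> simp <;> linarith

lemma vB1 : ![(3:ℝ),0] ∈ (PolyB B1 d1).extremePoints ℝ := by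
  refine vertex_extreme B1 d1 _ ((memP1 _).2 (by norm_num)) 0 1 ?_ ?_ ?_
  · rw [(row1 _).1]; norm_num [d1]
  · rw [(row1 _).2.1]; norm_num [d1]
  · intro x hx h0 h1
    rw [(row1 x).1] at h0; rw [(row1 x).2.1] at h1
    simp [d1] at h0 h1
    funext i; fin_cases i <;> simp <;> linarith

lemma vC1 : ![(1:ℝ),1] ∈ (PolyB B1 d1).extremePoints ℝ := by
  refine vertex_extreme B1 d1 _ ((memP1 _).2 (by norm_num)) 1 2 ?_ ?_ ?_
  · rw [(row1 _).2.1]; norm_num [d1]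
  · rw [(row1 _).2.2.1]; norm_num [d1, Matrix.cons_val_two, Matrix.cons_val_three]
  · intro x hx h0 h1
    rw [(row1 x).2.1] at h0; rw [(row1 x).2.2.1] at h1
    simp [d1] at h0 h1
    funext i; fin_cases i <;> simp <;> linarith

lemma vD1 : ![(0:ℝ),1] ∈ (PolyB B1 d1).extremePoints ℝ := by
  refine vertex_extreme B1 d1 _ ((memP1 _).2 (by norm_num)) 2 3 ?_ ?_ ?_
  · rw [(row1 _).2.2.1]; norm_num [d1, Matrix.cons_val_two, Matrix.cons_val_three]
  · rw [(row1 _).2.2.2]; norm_num [d1, Matrix.cons_val_two, Matrix.cons_val_three]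
  · intro x hx h0 h1
    rw [(row1 x).2.2.1] at h0; rw [(row1 x).2.2.2] at h1
    simp [d1] at h0 h1
    funext i; fin_cases i <;> simp <;> linarith

lemma ext1 (x : Fin 2 → ℝ) (hx : x ∈ (PolyB B1 d1).extremePoints ℝ) :
    x = ![0,0] ∨ x = ![3,0] ∨ x = ![1,1] ∨ x = ![0,1] := by
  obtain ⟨h0, h1, h2, h3⟩ := (memP1 x).1 hx.1
  have hxv : x = ![x 0, x 1] := by funext i; fin_cases i <;> rfl
  rcases eq_or_lt_of_le h0 with hb | hb
  · rcases eq_or_lt_of_le h3 with ha | ha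
    · left; funext i; fin_cases i <;> simp <;> linarith
    · rcases eq_or_lt_of_le h1 with hc | hc
      · right; left; funext i; fin_cases i <;> simp <;> linarith
      · exfalso
        set ε := min (x 0) (3 - x 0 - 2*x 1) with hεdef
        have hε1 : ε ≤ x 0 := min_le_left _ _
        have hε2 : ε ≤ 3 - x 0 - 2*x 1 := min_le_right _ _
        have hε : 0 < ε := lt_min (by linarith) (by linarith)
        refine not_extreme_of_dir (u := ![1,0]) (pt_ne_zero_left (by norm_num)) hε ?_ ?_ hx
        · rw [hxv, add_smul_pt, memP1]; norm_num <;> (and_intros <;> linarith)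
        · rw [hxv, sub_smul_pt, memP1]; norm_num <;> (and_intros <;> linarith)
  · rcases eq_or_lt_of_le h2 with hb1 | hb1
    · rcases eq_or_lt_of_le h3 with ha | ha
      · right; right; right; funext i; fin_cases i <;> simp <;> linarith
      · rcases eq_or_lt_of_le h1 with hc | hc
        · right; right; left; funext i; fin_cases i <;> simp <;> linarith
        · exfalso
          set ε := min (x 0) (3 - x 0 - 2*x 1) with hεdef
          have hε1 : ε ≤ x 0 := min_le_left _ _
          have hε2 : ε ≤ 3 - x 0 - 2*x 1 := min_le_right _ _
          have hε : 0 < ε := lt_min (by linarith) (by linarith)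
          refine not_extreme_of_dir (u := ![1,0]) (pt_ne_zero_left (by norm_num)) hε ?_ ?_ hx
          · rw [hxv, add_smul_pt, memP1]; norm_num <;> (and_intros <;> linarith)
          · rw [hxv, sub_smul_pt, memP1]; norm_num <;> (and_intros <;> linarith)
    · exfalso
      rcases eq_or_lt_of_le h3 with ha | ha
      · set ε := min (x 1) (min (1 - x 1) ((3 - x 0 - 2*x 1)/2)) with hεdef
        have hε1 : ε ≤ x 1 := min_le_left _ _
        have hε2 : ε ≤ 1 - x 1 := le_trans (min_le_right _ _) (min_le_left _ _)
        have hε3 : ε ≤ (3 - x 0 - 2*x 1)/2 := le_trans (min_le_right _ _) (min_le_right _ _)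
        have hε : 0 < ε := lt_min (by linarith) (lt_min (by linarith) (by linarith))
        refine not_extreme_of_dir (u := ![0,1]) (pt_ne_zero_right (by norm_num)) hε ?_ ?_ hx
        · rw [hxv, add_smul_pt, memP1]; norm_num <;> (and_intros <;> linarith)
        · rw [hxv, sub_smul_pt, memP1]; norm_num <;> (and_intros <;> linarith)
      · rcases eq_or_lt_of_le h1 with hc | hc
        · set ε := min (x 1) (1 - x 1) with hεdef
          have hε1 : ε ≤ x 1 := min_le_left _ _
          have hε2 : ε ≤ 1 - x 1 := min_le_right _ _
          have hε : 0 < ε := lt_min (by linarith) (by linarith)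
          refine not_extreme_of_dir (u := ![2,-1]) (pt_ne_zero_left (by norm_num)) hε ?_ ?_ hx
          · rw [hxv, add_smul_pt, memP1]; norm_num <;> (and_intros <;> linarith)
          · rw [hxv, sub_smul_pt, memP1]; norm_num <;> (and_intros <;> linarith)
        · set ε := min (x 0) (3 - x 0 - 2*x 1) with hεdef
          have hε1 : ε ≤ x 0 := min_le_left _ _
          have hε2 : ε ≤ 3 - x 0 - 2*x 1 := min_le_right _ _
          have hε : 0 < ε := lt_min (by linarith) (by linarith)
          refine not_extreme_of_dir (u := ![1,0]) (pt_ne_zero_left (by norm_num)) hε ?_ ?_ hx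
          · rw [hxv, add_smul_pt, memP1]; norm_num <;> (and_intros <;> linarith)
          · rw [hxv, sub_smul_pt, memP1]; norm_num <;> (and_intros <;> linarith)


lemma seg1_0 : {x ∈ PolyB B1 d1 | B1.mulVec x 0 = d1 0} =
    segment ℝ ![0,0] ![3,0] := by
  ext x
  simp only [Set.mem_sep_iff, Set.mem_setOf_eq]
  rw [memP1, (row1 x).1]
  constructor
  · rintro ⟨⟨h0, h1, h2, h3⟩, he⟩
    simp [d1] at he
    refine ⟨1 - x 0 / 3, x 0 / 3, by linarith, by linarith, by ring, ?_⟩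
    funext i; fin_cases i <;> simp <;> linarith
  · rintro ⟨u, v, hu, hv, huv, rfl⟩
    have hx : u • ![(0:ℝ),0] + v • ![(3:ℝ),0] = ![3*v, 0] := by
      funext i; fin_cases i <;> simp <;> ring
    rw [hx]
    norm_num [d1]
    and_intros <;> linarith

lemma seg1_1 : {x ∈ PolyB B1 d1 | B1.mulVec x 1 = d1 1} =
    segment ℝ ![3,0] ![1,1] := by
  ext x
  simp only [Set.mem_sep_iff, Set.mem_setOf_eq]
  rw [memP1, (row1 x).2.1]
  constructor
  · rintro ⟨⟨h0, h1, h2, h3⟩, he⟩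
    simp [d1] at he
    refine ⟨1 - x 1, x 1, by linarith, by linarith, by ring, ?_⟩
    funext i; fin_cases i <;> simp <;> linarith
  · rintro ⟨u, v, hu, hv, huv, rfl⟩
    have hx : u • ![(3:ℝ),0] + v • ![(1:ℝ),1] = ![3*u + v, v] := by
      funext i; fin_cases i <;> simp <;> ring
    rw [hx]
    norm_num [d1]
    and_intros <;> linarith

lemma seg1_2 : {x ∈ PolyB B1 d1 | B1.mulVec x 2 = d1 2} =
    segment ℝ ![0,1] ![1,1] := by
  ext x
  simp only [Set.mem_sep_iff, Set.mem_setOf_eq]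
  rw [memP1, (row1 x).2.2.1]
  constructor
  · rintro ⟨⟨h0, h1, h2, h3⟩, he⟩
    simp [d1] at he
    refine ⟨1 - x 0, x 0, by linarith, by linarith, by ring, ?_⟩
    funext i; fin_cases i <;> simp <;> linarith
  · rintro ⟨u, v, hu, hv, huv, rfl⟩
    have hx : u • ![(0:ℝ),1] + v • ![(1:ℝ),1] = ![v, u + v] := by
      funext i; fin_cases i <;> simp <;> ring
    rw [hx]
    norm_num [d1, Matrix.cons_val_two, Matrix.cons_val_three]
    and_intros <;> linarith

lemma seg1_3 : {x ∈ PolyB B1 d1 | B1.mulVec x 3 = d1 3} =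
    segment ℝ ![0,0] ![0,1] := by
  ext x
  simp only [Set.mem_sep_iff, Set.mem_setOf_eq]
  rw [memP1, (row1 x).2.2.2]
  constructor
  · rintro ⟨⟨h0, h1, h2, h3⟩, he⟩
    simp [d1] at he
    refine ⟨1 - x 1, x 1, by linarith, by linarith, by ring, ?_⟩
    funext i; fin_cases i <;> simp <;> linarith
  · rintro ⟨u, v, hu, hv, huv, rfl⟩
    have hx : u • ![(0:ℝ),0] + v • ![(0:ℝ),1] = ![0, v] := by
      funext i; fin_cases i <;> simp <;> ring
    rw [hx]
    norm_num [d1, Matrix.cons_val_two, Matrix.cons_val_three]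
    and_intros <;> linarith

lemma minrep1 : IsMinimalRep B1 d1 := by
  intro i
  fin_cases i
  · exact facet_of_seg B1 d1 0 _ _ seg1_0 (by intro h; have := congrFun h 0; norm_num at this)
  · exact facet_of_seg B1 d1 1 _ _ seg1_1 (by intro h; have := congrFun h 0; norm_num at this)
  · exact facet_of_seg B1 d1 2 _ _ seg1_2 (by intro h; have := congrFun h 0; norm_num at this)
  · exact facet_of_seg B1 d1 3 _ _ seg1_3 (by intro h; have := congrFun h 1; norm_num at this)

lemma circB1_slant : IsCircuitB B1 ![2,-1] := by
  refine ⟨pt_ne_zero_left (by norm_num), ⟨![2,-1], ?_, by decide⟩, ?_⟩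
  · intro i; fin_cases i <;> norm_num
  · rintro ⟨y, hy, hss⟩
    have h1 : B1.mulVec y 1 = 0 := by
      by_contra hc
      have hmem : (1 : Fin 4) ∈ {i | B1.mulVec y i ≠ 0} := hc
      have h2 := hss.1 hmem
      simp only [Set.mem_setOf_eq] at h2
      rw [(row1 ![2,-1]).2.1] at h2
      norm_num at h2
    rw [(row1 y).2.1] at h1
    obtain ⟨j, hj1, hj2⟩ := Set.exists_of_ssubset hss
    simp only [Set.mem_setOf_eq] at hj1 hj2
    apply hy
    fin_cases j
    · replace hj2 : B1.mulVec y 0 = 0 := not_not.mp hj2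
      rw [(row1 y).1] at hj2
      funext i; fin_cases i <;> simp <;> linarith
    · exfalso
      replace hj1 : B1.mulVec ![2,-1] 1 ≠ 0 := hj1
      rw [(row1 ![2,-1]).2.1] at hj1; norm_num at hj1
    · replace hj2 : B1.mulVec y 2 = 0 := not_not.mp hj2
      rw [(row1 y).2.2.1] at hj2
      funext i; fin_cases i <;> simp <;> linarith
    · replace hj2 : B1.mulVec y 3 = 0 := not_not.mp hj2
      rw [(row1 y).2.2.2] at hj2
      funext i; fin_cases i <;> simp <;> linarith

lemma circB1_up : IsCircuitB B1 ![0,1] := by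
  refine ⟨pt_ne_zero_right (by norm_num), ⟨![0,1], ?_, by decide⟩, ?_⟩
  · intro i; fin_cases i <;> norm_num
  · rintro ⟨y, hy, hss⟩
    have h3 : B1.mulVec y 3 = 0 := by
      by_contra hc
      have hmem : (3 : Fin 4) ∈ {i | B1.mulVec y i ≠ 0} := hc
      have h2 := hss.1 hmem
      simp only [Set.mem_setOf_eq] at h2
      rw [(row1 ![0,1]).2.2.2] at h2
      norm_num at h2
    rw [(row1 y).2.2.2] at h3
    have hy0 : y 0 = 0 := by linarith
    obtain ⟨j, hj1, hj2⟩ := Set.exists_of_ssubset hss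
    simp only [Set.mem_setOf_eq] at hj1 hj2
    apply hy
    fin_cases j
    · replace hj2 : B1.mulVec y 0 = 0 := not_not.mp hj2
      rw [(row1 y).1] at hj2
      funext i; fin_cases i <;> simp [hy0] <;> linarith
    · replace hj2 : B1.mulVec y 1 = 0 := not_not.mp hj2
      rw [(row1 y).2.1] at hj2
      funext i; fin_cases i <;> simp [hy0] <;> linarith
    · replace hj2 : B1.mulVec y 2 = 0 := not_not.mp hj2
      rw [(row1 y).2.2.1] at hj2
      funext i; fin_cases i <;> simp [hy0, hj2]
    · exfalso
      replace hj1 : B1.mulVec ![0,1] 3 ≠ 0 := hj1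
      rw [(row1 ![0,1]).2.2.2] at hj1; norm_num at hj1

noncomputable def w1 : Fin 4 → Fin 2 → ℝ := ![![0,1], ![2,0], ![2,1/2], ![3,0]]

lemma walk_w1 : IsCircuitWalk (PolyB B1 d1) (IsCircuitB B1) w1 := by
  refine ⟨vD1, vB1, ?_⟩
  intro i
  fin_cases i
  · refine ⟨(memP1 _).2 (by norm_num [w1]), ![2,-1], 1, circB1_slant, one_pos, ?_, ?_⟩
    · show (![2,0] : Fin 2 → ℝ) = ![(0:ℝ),1] + (1:ℝ) • ![2,-1]
      rw [add_smul_pt]; symm; exact pt_eq_iff.2 ⟨by norm_num, by norm_num⟩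
    · intro β hβ hmem
      have h : ![(0:ℝ),1] + β • ![(2:ℝ),-1] ∈ PolyB B1 d1 := hmem
      rw [add_smul_pt, memP1] at h
      norm_num at h
      linarith
  · refine ⟨(memP1 _).2 (by norm_num [w1]), ![0,1], 1/2, circB1_up, by norm_num, ?_, ?_⟩
    · show (![2,1/2] : Fin 2 → ℝ) = ![(2:ℝ),0] + (1/2:ℝ) • ![0,1]
      rw [add_smul_pt]; symm; exact pt_eq_iff.2 ⟨by norm_num, by norm_num⟩
    · intro β hβ hmem
      have h : ![(2:ℝ),0] + β • ![(0:ℝ),1] ∈ PolyB B1 d1 := hmem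
      rw [add_smul_pt, memP1] at h
      norm_num at h
      linarith
  · refine ⟨(memP1 _).2 (by norm_num [w1]), ![2,-1], 1/2, circB1_slant, by norm_num, ?_, ?_⟩
    · show (![3,0] : Fin 2 → ℝ) = ![(2:ℝ),1/2] + (1/2:ℝ) • ![2,-1]
      rw [add_smul_pt]; symm; exact pt_eq_iff.2 ⟨by norm_num, by norm_num⟩
    · intro β hβ hmem
      have h : ![(2:ℝ),1/2] + β • ![(2:ℝ),-1] ∈ PolyB B1 d1 := hmem
      rw [add_smul_pt, memP1] at h
      norm_num at h
      linarith

lemma notint_w1 : ¬ IsIntegralWalk w1 := by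
  intro h
  obtain ⟨z, hz⟩ := h 2 1
  have h1 : ((1:ℝ)/2) = (z : ℝ) := hz
  have h2 : (2*z : ℤ) = 1 := by
    have hc : ((2*z : ℤ) : ℝ) = 1 := by push_cast; linarith
    exact_mod_cast hc
  omega

lemma P1_clause : IsIntegral2DPolytope B1 d1 ∧
    ∃ (k : ℕ) (y : Fin (k + 1) → Fin 2 → ℝ),
      IsCircuitWalk (PolyB B1 d1) (IsCircuitB B1) y ∧ ¬ IsIntegralWalk y := by
  refine ⟨⟨?_, ⟨![0,0], (memP1 _).2 (by norm_num)⟩, ?_, ?_, minrep1⟩, 3, w1, walk_w1, notint_w1⟩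
  · apply (Metric.isBounded_closedBall (x := (0 : Fin 2 → ℝ)) (r := 3)).subset
    intro x hx
    rw [memP1] at hx
    rw [Metric.mem_closedBall, dist_zero_right]
    refine pi_norm_le_iff_of_nonneg (by norm_num) |>.2 ?_
    intro i
    fin_cases i
    · show ‖x 0‖ ≤ 3
      rw [Real.norm_eq_abs, abs_le]
      constructor <;> linarith [hx.1, hx.2.1, hx.2.2.1, hx.2.2.2]
    · show ‖x 1‖ ≤ 3
      rw [Real.norm_eq_abs, abs_le]
      constructor <;> linarith [hx.1, hx.2.1, hx.2.2.1, hx.2.2.2]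
  · exact affineSpan_top_of_pts ((memP1 _).2 (by norm_num)) ((memP1 _).2 (by norm_num))
      ((memP1 _).2 (by norm_num))
  · intro v hv j
    rcases ext1 v hv with h | h | h | h <;> subst h
    · fin_cases j
      exacts [⟨0, by norm_num⟩, ⟨0, by norm_num⟩]
    · fin_cases j
      exacts [⟨3, by norm_num⟩, ⟨0, by norm_num⟩]
    · fin_cases j
      exacts [⟨1, by norm_num⟩, ⟨1, by norm_num⟩]
    · fin_cases j
      exacts [⟨0, by norm_num⟩, ⟨1, by norm_num⟩]

theorem circuit_walk_hierarchy_distinct :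
    -- P₁ : a GCW polytope admitting a non-integral circuit walk
    (∃ (m : ℕ) (B : Matrix (Fin m) (Fin 2) ℝ) (d : Fin m → ℝ),
      IsIntegral2DPolytope B d ∧
      ∃ (k : ℕ) (y : Fin (k + 1) → Fin 2 → ℝ),
        IsCircuitWalk (PolyB B d) (IsCircuitB B) y ∧ ¬ IsIntegralWalk y) ∧
    -- P₂ : an ICW polytope that is not VCW
    (∃ (m : ℕ) (B : Matrix (Fin m) (Fin 2) ℝ) (d : Fin m → ℝ),
      IsIntegral2DPolytope B d ∧
      (∀ (k : ℕ) (y : Fin (k + 1) → Fin 2 → ℝ),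
        IsCircuitWalk (PolyB B d) (IsCircuitB B) y → IsIntegralWalk y) ∧
      ∃ (k : ℕ) (y : Fin (k + 1) → Fin 2 → ℝ),
        IsCircuitWalk (PolyB B d) (IsCircuitB B) y ∧ ¬ IsVertexWalk (PolyB B d) y) ∧
    -- P₃ : a VCW polytope that is not ECW
    (∃ (m : ℕ) (B : Matrix (Fin m) (Fin 2) ℝ) (d : Fin m → ℝ),
      IsIntegral2DPolytope B d ∧
      (∀ (k : ℕ) (y : Fin (k + 1) → Fin 2 → ℝ),
        IsCircuitWalk (PolyB B d) (IsCircuitB B) y → IsVertexWalk (PolyB B d) y) ∧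
      ∃ (k : ℕ) (y : Fin (k + 1) → Fin 2 → ℝ),
        IsCircuitWalk (PolyB B d) (IsCircuitB B) y ∧ ¬ IsEdgeWalk (PolyB B d) y) ∧
    -- P₄ : an ECW polytope
    (∃ (m : ℕ) (B : Matrix (Fin m) (Fin 2) ℝ) (d : Fin m → ℝ),
      IsIntegral2DPolytope B d ∧
      ∀ (k : ℕ) (y : Fin (k + 1) → Fin 2 → ℝ),
        IsCircuitWalk (PolyB B d) (IsCircuitB B) y → IsEdgeWalk (PolyB B d) y) := by
  exact ⟨⟨4, B1, d1, P1_clause.1, P1_clause.2⟩,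
    ⟨4, B2, d2, P2_clause.1, P2_clause.2.1, P2_clause.2.2⟩,
    ⟨6, B3, d3, P3_clause.1, P3_clause.2.1, P3_clause.2.2⟩,
    ⟨3, B4, d4, P4_clause.1, P4_clause.2⟩⟩
end

section
/- Let P = {x ∈ ℝⁿ : Ax = b, Bx ≤ d} be a pointed integral polyhedron (all of its vertices have integer coordinates) whose stacked constraint matrix (A; B) is totally unimodular. Then every circuit walk in P is integral, i.e., every point yⁱ of every circuit walk in P has integer components. -/
/-!
Let `y` be an integral point of the walk and `y + α g` the next one. Maximality of the step forces
some row `j` with `(B g)_j > 0` to be tight at `y + α g`; since `P` is pointed, the face where row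
`j` is tight contains a vertex, so `d_j` is an integer and hence so is `α (B g)_j = d_j - (B y)_j`.
On the other hand, support-minimality of `B g` makes `g / (B g)_j` the unique solution of the
system given by `A`, the rows of `B` vanishing on `g`, and row `j` with right-hand side `1`. This
system is totally unimodular, so by Cramer's rule its solution is integral. Hence `α g` is
integral, and the claim follows by induction along the walk.
-/

open Matrix

/-- The polyhedron `{x ∈ ℝⁿ : A x = b, B x ≤ d}`. -/
def PolyAB {mA mB n : ℕ} (A : Matrix (Fin mA) (Fin n) ℝ) (b : Fin mA → ℝ)
    (B : Matrix (Fin mB) (Fin n) ℝ) (d : Fin mB → ℝ) : Set (Fin n → ℝ) :=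
  {x | A.mulVec x = b ∧ ∀ i, B.mulVec x i ≤ d i}

/-- `g` is a circuit of the system `A x = b`, `B x ≤ d`:  `g ∈ ker A \ {0}` with coprime integer
components such that `B g` is support-minimal over `{B x : x ∈ ker A \ {0}}`. -/
def IsCircuit {mA mB n : ℕ} (A : Matrix (Fin mA) (Fin n) ℝ)
    (B : Matrix (Fin mB) (Fin n) ℝ) (g : Fin n → ℝ) : Prop :=
  A.mulVec g = 0 ∧ g ≠ 0 ∧ IsCoprimeIntegerVec g ∧
    ¬ ∃ y : Fin n → ℝ, A.mulVec y = 0 ∧ y ≠ 0 ∧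
      {i | B.mulVec y i ≠ 0} ⊂ {i | B.mulVec g i ≠ 0}

def IsIntegerVector {ι : Type*} (x : ι → ℝ) : Prop :=
  ∀ i, x i ∈ (Int.castRingHom ℝ).range

lemma isIntegerVector_iff {ι : Type*} {x : ι → ℝ} : IsIntegerVector x ↔ ∀ i, ∃ z : ℤ, x i = z :=
  forall_congr' fun _ => exists_congr fun _ => eq_comm

namespace IsIntegerVector

variable {ι κ : Type*} {x y : ι → ℝ}

lemma add (hx : IsIntegerVector x) (hy : IsIntegerVector y) : IsIntegerVector (x + y) :=
  fun i => add_mem (hx i) (hy i)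

lemma smul (hx : IsIntegerVector x) {c : ℝ} (hc : c ∈ (Int.castRingHom ℝ).range) :
    IsIntegerVector (c • x) :=
  fun i => mul_mem hc (hx i)

lemma mulVec [Fintype ι] {M : Matrix κ ι ℝ} (hM : ∀ i, IsIntegerVector (M i))
    (hx : IsIntegerVector x) : IsIntegerVector (M *ᵥ x) :=
  fun i => sum_mem fun j _ => mul_mem (hM i j) (hx j)

end IsIntegerVector

namespace Matrix

variable {m n : Type*}

lemma mulVec_add_smul_apply {R : Type*} [CommRing R] [Fintype n] (M : Matrix m n R)
    (x z : n → R) (t : R) (j : m) : (M *ᵥ (x + t • z)) j = (M *ᵥ x) j + t * (M *ᵥ z) j := by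
  simp [mulVec_add, mulVec_smul]

lemma IsTotallyUnimodular.isIntegerVector_row {M : Matrix m n ℝ} (hM : M.IsTotallyUnimodular)
    (i : m) : IsIntegerVector (M i) := by
  intro j
  obtain ⟨s, hs⟩ := hM.apply i j
  rw [← hs]
  cases s <;> simp

lemma IsTotallyUnimodular.det_eq_one_or_neg_one [Fintype n] [DecidableEq n]
    {Q : Matrix n n ℝ} (hQ : Q.IsTotallyUnimodular) (hdet : Q.det ≠ 0) :
    Q.det = 1 ∨ Q.det = -1 := by
  obtain ⟨s, hs⟩ := (isTotallyUnimodular_iff_fintype Q).1 hQ n id id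
  rw [submatrix_id_id] at hs
  cases s <;> simp_all [eq_comm]

lemma isIntegerVector_adjugate_row [Fintype n] [DecidableEq n] {Q : Matrix n n ℝ}
    (hQ : ∀ i, IsIntegerVector (Q i)) (i : n) : IsIntegerVector (adjugate Q i) := by
  choose Qz hQz using hQ
  have : Q = (Int.castRingHom ℝ).mapMatrix (Matrix.of Qz) := by ext i j; exact (hQz i j).symm
  intro j
  rw [this, ← RingHom.map_adjugate]
  exact ⟨_, rfl⟩

lemma IsTotallyUnimodular.isIntegerVector_of_mulVec [Fintype n] [DecidableEq n]
    {Q : Matrix n n ℝ} (hQ : Q.IsTotallyUnimodular) (hunit : IsUnit Q) {x : n → ℝ}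
    (hx : IsIntegerVector (Q *ᵥ x)) : IsIntegerVector x := by
  have hdet := hQ.det_eq_one_or_neg_one ((isUnit_iff_isUnit_det Q).1 hunit).ne_zero
  have hsq : Q.det * Q.det = 1 := by rcases hdet with h | h <;> simp [h]
  have hx_eq : x = Q.det • (adjugate Q *ᵥ (Q *ᵥ x)) := by
    rw [mulVec_mulVec, adjugate_mul, smul_mulVec, one_mulVec, smul_smul, hsq, one_smul]
  rw [hx_eq]
  refine (hx.mulVec (isIntegerVector_adjugate_row hQ.isIntegerVector_row)).smul ?_
  rcases hdet with h | h <;> rw [h]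
  exacts [one_mem _, neg_mem (one_mem _)]

lemma exists_isUnit_submatrix_of_mulVec_injective {K : Type*} [Field K] [Fintype m]
    [Fintype n] [DecidableEq n] {N : Matrix m n K} (hN : Function.Injective N.mulVec) :
    ∃ f : n → m, IsUnit (N.submatrix f id) := by
  obtain ⟨κ, a, ha, hspan, hli⟩ := exists_linearIndependent' K N.row
  have : Finite κ := Finite.of_injective a ha
  have : Fintype κ := Fintype.ofFinite κ
  have hrank : N.rank = Fintype.card n := by
    rw [← rank_transpose]
    exact LinearIndependent.rank_matrix (by simpa [row_transpose, mulVec_injective_iff] using hN)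
  have hcard : Fintype.card κ = Fintype.card n := by
    rw [← hrank, rank_eq_finrank_span_row, ← hspan,
      linearIndependent_iff_card_eq_finrank_span.mp hli, Set.finrank]
  let e : n ≃ κ := Fintype.equivOfCardEq hcard.symm
  refine ⟨a ∘ e, linearIndependent_rows_iff_isUnit.1 ?_⟩
  exact hli.comp e e.injective

lemma IsTotallyUnimodular.isIntegerVector_of_mulVec_of_injective [Fintype m] [Fintype n]
    [DecidableEq n] {M : Matrix m n ℝ} (hM : M.IsTotallyUnimodular)
    (hinj : Function.Injective M.mulVec) {x : n → ℝ} (hx : IsIntegerVector (M *ᵥ x)) :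
    IsIntegerVector x := by
  obtain ⟨f, hf⟩ := exists_isUnit_submatrix_of_mulVec_injective hinj
  exact (hM.submatrix f id).isIntegerVector_of_mulVec hf fun i => hx (f i)

end Matrix

lemma IsCircuit.isIntegerVector_inv_smul {mA mB n : ℕ} {A : Matrix (Fin mA) (Fin n) ℝ}
    {B : Matrix (Fin mB) (Fin n) ℝ} (hTU : (fromRows A B).IsTotallyUnimodular) {g : Fin n → ℝ}
    (hg : IsCircuit A B g) {j₀ : Fin mB} (hj₀ : (B *ᵥ g) j₀ ≠ 0) :
    IsIntegerVector (((B *ᵥ g) j₀)⁻¹ • g) := by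
  obtain ⟨hAg, -, -, hmin⟩ := hg
  let S := {i : Fin mA ⊕ Fin mB // (fromRows A B *ᵥ g) i = 0 ∨ i = Sum.inr j₀}
  let M := (fromRows A B).submatrix (Subtype.val : S → _) id
  have hM : ∀ x (i : S), (M *ᵥ x) i = (fromRows A B *ᵥ x) i.val := fun _ _ => rfl
  have hker : ∀ z, M *ᵥ z = 0 → z = 0 := by
    intro z hz
    have hz' : ∀ i (hi : (fromRows A B *ᵥ g) i = 0 ∨ i = Sum.inr j₀),
        (fromRows A B *ᵥ z) i = 0 := fun i hi => by rw [← hM z ⟨i, hi⟩, hz, Pi.zero_apply]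
    simp only [fromRows_mulVec, Sum.forall, Sum.elim_inl, Sum.elim_inr, Sum.inr.injEq,
      reduceCtorEq, or_false, hAg, Pi.zero_apply, forall_const] at hz'
    by_contra hz0
    refine hmin ⟨z, funext hz'.1, hz0, ?_⟩
    exact ⟨fun j hj hgj => hj (hz'.2 j (Or.inl hgj)),
      fun hsub => hsub hj₀ (hz'.2 j₀ (Or.inr rfl))⟩
  refine (hTU.submatrix Subtype.val id).isIntegerVector_of_mulVec_of_injective (M := M)
    (fun x y hxy => sub_eq_zero.1 (hker _ (by rw [mulVec_sub, hxy, sub_self]))) ?_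
  rintro ⟨i, hi | rfl⟩ <;> rw [hM, mulVec_smul, Pi.smul_apply, smul_eq_mul]
  · rw [hi, mul_zero]
    exact zero_mem _
  · rw [fromRows_mulVec, Sum.elim_inr, inv_mul_cancel₀ hj₀]
    exact one_mem _

namespace PolyAB

variable {mA mB n : ℕ} {A : Matrix (Fin mA) (Fin n) ℝ} {b : Fin mA → ℝ}
  {B : Matrix (Fin mB) (Fin n) ℝ} {d : Fin mB → ℝ}

lemma mem_extremePoints_of_forall_ker {x : Fin n → ℝ} (hx : x ∈ PolyAB A b B d)
    (h : ∀ z, A *ᵥ z = 0 → (∀ j, (B *ᵥ x) j = d j → (B *ᵥ z) j = 0) → z = 0) :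
    x ∈ (PolyAB A b B d).extremePoints ℝ := by
  refine mem_extremePoints.2 ⟨hx, fun x₁ hx₁ x₂ hx₂ hseg => ?_⟩
  obtain ⟨a₁, a₂, ha₁, ha₂, ha, rfl⟩ := hseg
  have htight : ∀ j, (B *ᵥ (a₁ • x₁ + a₂ • x₂)) j = d j →
      (B *ᵥ x₁) j = d j ∧ (B *ᵥ x₂) j = d j := by
    intro j hj
    simp only [mulVec_add, mulVec_smul, Pi.add_apply, Pi.smul_apply, smul_eq_mul] at hj
    have h₁ : 0 ≤ a₁ * (d j - (B *ᵥ x₁) j) := mul_nonneg ha₁.le (sub_nonneg.2 (hx₁.2 j))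
    have h₂ : 0 ≤ a₂ * (d j - (B *ᵥ x₂) j) := mul_nonneg ha₂.le (sub_nonneg.2 (hx₂.2 j))
    have hsum : a₁ * (d j - (B *ᵥ x₁) j) + a₂ * (d j - (B *ᵥ x₂) j) = 0 := by
      linear_combination d j * ha - hj
    obtain ⟨e₁, e₂⟩ := (add_eq_zero_iff_of_nonneg h₁ h₂).1 hsum
    rw [mul_eq_zero_iff_left ha₁.ne', sub_eq_zero] at e₁
    rw [mul_eq_zero_iff_left ha₂.ne', sub_eq_zero] at e₂
    exact ⟨e₁.symm, e₂.symm⟩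
  have hx₁₂ : x₁ - x₂ = 0 := h _ (by rw [mulVec_sub, hx₁.1, hx₂.1, sub_self]) fun j hj => by
    rw [mulVec_sub, Pi.sub_apply, (htight j hj).1, (htight j hj).2, sub_self]
  rw [sub_eq_zero] at hx₁₂
  subst hx₁₂
  rw [← add_smul, ha, one_smul]
  exact ⟨rfl, rfl⟩

lemma exists_tight_on_ray {x z : Fin n → ℝ} (hx : x ∈ PolyAB A b B d) (hz : A *ᵥ z = 0)
    {j₁ : Fin mB} (hj₁ : 0 < (B *ᵥ z) j₁) :
    ∃ t : ℝ, 0 ≤ t ∧ x + t • z ∈ PolyAB A b B d ∧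
      ∃ j, 0 < (B *ᵥ z) j ∧ (B *ᵥ (x + t • z)) j = d j := by
  classical
  obtain ⟨j, hj, hmin⟩ := ({j | 0 < (B *ᵥ z) j} : Finset _).exists_min_image
    (fun j => (d j - (B *ᵥ x) j) / (B *ᵥ z) j) ⟨j₁, by simpa using hj₁⟩
  rw [Finset.mem_filter] at hj
  refine ⟨_, div_nonneg (sub_nonneg.2 (hx.2 j)) hj.2.le, ⟨?_, fun i => ?_⟩, j, hj.2, ?_⟩
  · rw [mulVec_add, mulVec_smul, hz, smul_zero, add_zero, hx.1]
  · rw [mulVec_add_smul_apply]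
    rcases le_or_gt ((B *ᵥ z) i) 0 with hi | hi
    · nlinarith [hx.2 i, div_nonneg (sub_nonneg.2 (hx.2 j)) hj.2.le]
    · have := hmin i (by simpa using hi)
      rw [le_div_iff₀ hi] at this
      linarith
  · rw [mulVec_add_smul_apply, div_mul_cancel₀ _ hj.2.ne']
    ring

lemma exists_extremePoint_tight (hker : ∀ z, A *ᵥ z = 0 → B *ᵥ z = 0 → z = 0)
    {x : Fin n → ℝ} (hx : x ∈ PolyAB A b B d) :
    ∃ v ∈ (PolyAB A b B d).extremePoints ℝ, ∀ j, (B *ᵥ x) j = d j → (B *ᵥ v) j = d j := by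
  classical
  induction hN : (Finset.univ.filter fun j => (B *ᵥ x) j ≠ d j).card
    using Nat.strong_induction_on generalizing x with
  | _ N ih =>
  by_cases hext : x ∈ (PolyAB A b B d).extremePoints ℝ
  · exact ⟨x, hext, fun _ => id⟩
  obtain ⟨z, hz, htight, hz0⟩ : ∃ z, A *ᵥ z = 0 ∧
      (∀ j, (B *ᵥ x) j = d j → (B *ᵥ z) j = 0) ∧ z ≠ 0 := by
    by_contra! h
    exact hext (mem_extremePoints_of_forall_ker hx h)
  obtain ⟨w, hw, hwtight, j₁, hj₁⟩ : ∃ w, A *ᵥ w = 0 ∧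
      (∀ j, (B *ᵥ x) j = d j → (B *ᵥ w) j = 0) ∧ ∃ j, 0 < (B *ᵥ w) j := by
    obtain ⟨j, hj⟩ : ∃ j, (B *ᵥ z) j ≠ 0 := by
      by_contra! h
      exact hz0 (hker z hz (funext h))
    rcases hj.lt_or_gt with hj | hj
    · exact ⟨-z, by simp [mulVec_neg, hz], fun i hi => by simp [mulVec_neg, htight i hi], j,
        by simpa [mulVec_neg] using hj⟩
    · exact ⟨z, hz, htight, j, hj⟩
  obtain ⟨t, -, hx', j, hj, hjtight⟩ := exists_tight_on_ray hx hw hj₁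
  have htight' : ∀ i, (B *ᵥ x) i = d i → (B *ᵥ (x + t • w)) i = d i := fun i hi => by
    rw [mulVec_add_smul_apply, hwtight i hi, hi, mul_zero, add_zero]
  have hfewer : (Finset.univ.filter fun i => (B *ᵥ (x + t • w)) i ≠ d i).card < N := by
    rw [← hN]
    refine Finset.card_lt_card ⟨fun i => ?_, fun hsub => ?_⟩
    · simp only [Finset.mem_filter, Finset.mem_univ, true_and]
      exact mt (htight' i)
    · have := hsub (Finset.mem_filter.2 ⟨Finset.mem_univ j, fun h => hj.ne' (hwtight j h)⟩)
      exact (Finset.mem_filter.1 this).2 hjtight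
  obtain ⟨v, hv, hvtight⟩ := ih _ hfewer hx' rfl
  exact ⟨v, hv, fun i hi => hvtight i (htight' i hi)⟩

lemma exists_tight_of_maximal_step {y g : Fin n → ℝ} {α : ℝ} (hg : A *ᵥ g = 0)
    (hy : y + α • g ∈ PolyAB A b B d) (hmax : ∀ β, α < β → y + β • g ∉ PolyAB A b B d) :
    ∃ j, 0 < (B *ᵥ g) j ∧ (B *ᵥ (y + α • g)) j = d j := by
  have hshift : ∀ t : ℝ, y + α • g + t • g = y + (α + t) • g := fun t => by
    rw [add_smul, add_assoc]
  by_cases hpos : ∃ j, 0 < (B *ᵥ g) j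
  · obtain ⟨j₁, hj₁⟩ := hpos
    obtain ⟨t, ht, hmem, j, hj, htight⟩ := exists_tight_on_ray hy hg hj₁
    rcases ht.eq_or_lt with rfl | ht
    · exact ⟨j, hj, by simpa using htight⟩
    · exact absurd (hshift t ▸ hmem) (hmax _ (by linarith))
  · simp only [not_exists, not_lt] at hpos
    refine absurd ?_ (hmax (α + 1) (by linarith))
    rw [← hshift]
    refine ⟨by rw [mulVec_add, mulVec_smul, hg, smul_zero, add_zero, hy.1], fun j => ?_⟩
    rw [mulVec_add_smul_apply]
    linarith [hy.2 j, hpos j]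

lemma eq_zero_of_mulVec_eq_zero (hP : ((PolyAB A b B d).extremePoints ℝ).Nonempty)
    {z : Fin n → ℝ} (hA : A *ᵥ z = 0) (hB : B *ᵥ z = 0) : z = 0 := by
  obtain ⟨v, hv⟩ := hP
  have hmem : ∀ s : ℝ, v + s • z ∈ PolyAB A b B d := fun s =>
    ⟨by rw [mulVec_add, mulVec_smul, hA, smul_zero, add_zero, hv.1.1], fun j => by
      rw [mulVec_add_smul_apply, hB, Pi.zero_apply, mul_zero, add_zero]; exact hv.1.2 j⟩
  have hseg : v ∈ openSegment ℝ (v + (-1 : ℝ) • z) (v + (1 : ℝ) • z) :=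
    ⟨1 / 2, 1 / 2, by norm_num, by norm_num, by norm_num, by module⟩
  simpa using ((mem_extremePoints.1 hv).2 _ (hmem _) _ (hmem 1) hseg).2

end PolyAB

lemma IsCircuitWalk.mem {n k : ℕ} {P : Set (Fin n → ℝ)} {Circ : (Fin n → ℝ) → Prop}
    {y : Fin (k + 1) → Fin n → ℝ} (hy : IsCircuitWalk P Circ y) (i : Fin (k + 1)) : y i ∈ P := by
  rcases Fin.eq_castSucc_or_eq_last i with ⟨i, rfl⟩ | rfl
  · exact (hy.2.2 i).1
  · exact hy.2.1.1

lemma IsCircuit.isIntegerVector_add_smul_of_maximal {mA mB n : ℕ}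
    {A : Matrix (Fin mA) (Fin n) ℝ} {b : Fin mA → ℝ} {B : Matrix (Fin mB) (Fin n) ℝ}
    {d : Fin mB → ℝ} (hpointed : ((PolyAB A b B d).extremePoints ℝ).Nonempty)
    (hintegral : ∀ v ∈ (PolyAB A b B d).extremePoints ℝ, IsIntegerVector v)
    (hTU : (fromRows A B).IsTotallyUnimodular) {y g : Fin n → ℝ} {α : ℝ} (hg : IsCircuit A B g)
    (hy : IsIntegerVector y) (hy' : y + α • g ∈ PolyAB A b B d)
    (hmax : ∀ β, α < β → y + β • g ∉ PolyAB A b B d) :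
    IsIntegerVector (y + α • g) := by
  obtain ⟨j, hj, htight⟩ := PolyAB.exists_tight_of_maximal_step hg.1 hy' hmax
  obtain ⟨v, hv, hvtight⟩ := PolyAB.exists_extremePoint_tight
    (fun _ => PolyAB.eq_zero_of_mulVec_eq_zero hpointed) hy'
  have hB : ∀ i, IsIntegerVector (B i) := fun i => hTU.isIntegerVector_row (Sum.inr i)
  have hd : d j ∈ (Int.castRingHom ℝ).range := by
    rw [← hvtight j htight]
    exact (hintegral v hv).mulVec hB j
  have hstep : α * (B *ᵥ g) j = d j - (B *ᵥ y) j := by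
    rw [mulVec_add_smul_apply] at htight
    linarith
  have hαg : α • g = (α * (B *ᵥ g) j) • ((B *ᵥ g) j)⁻¹ • g := by
    rw [smul_smul, mul_assoc, mul_inv_cancel₀ hj.ne', mul_one]
  rw [hαg, hstep]
  exact hy.add ((hg.isIntegerVector_inv_smul hTU hj.ne').smul (sub_mem hd (hy.mulVec hB j)))

theorem circuit_walks_integral_of_totallyUnimodular
    {mA mB n : ℕ} (A : Matrix (Fin mA) (Fin n) ℝ) (b : Fin mA → ℝ)
    (B : Matrix (Fin mB) (Fin n) ℝ) (d : Fin mB → ℝ)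
    (hpointed : ((PolyAB A b B d).extremePoints ℝ).Nonempty)
    (hintegral : ∀ v ∈ (PolyAB A b B d).extremePoints ℝ, ∀ j, ∃ z : ℤ, v j = (z : ℝ))
    (hTU : (Matrix.fromRows A B).IsTotallyUnimodular) :
    ∀ (k : ℕ) (y : Fin (k + 1) → Fin n → ℝ),
      IsCircuitWalk (PolyAB A b B d) (IsCircuit A B) y → IsIntegralWalk y := by
  intro k y hy
  have hvert : ∀ v ∈ (PolyAB A b B d).extremePoints ℝ, IsIntegerVector v :=
    fun v hv => isIntegerVector_iff.2 (hintegral v hv)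
  have hpts : ∀ i, IsIntegerVector (y i) := by
    refine Fin.induction (hvert _ hy.1) fun i hi => ?_
    obtain ⟨-, g, α, hg, -, hstep, hmax⟩ := hy.2.2 i
    rw [hstep]
    exact hg.isIntegerVector_add_smul_of_maximal hpointed hvert hTU hi (hstep ▸ hy.mem i.succ) hmax
  exact fun i => isIntegerVector_iff.1 (hpts i)
end

section
/- Let P = {x ∈ ℝⁿ : Ax = b, Bx ≤ d} be a pointed polyhedron, let g ∈ ker(A) be a nonzero vector whose components are integers with greatest common divisor 1, and let B′ denote the maximal row-submatrix of B such that B′g = 0. Then g is a circuit of P if and only if the rank of the stacked matrix (A; B′) equals n − 1. -/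
open Matrix

/-!
Pointedness means `ker A ∩ ker B = 0`, so `B g ≠ 0`. The kernel of `(A; B')` consists of the
`y ∈ ker A` whose `B`-support lies in that of `g`. If `g` is support-minimal, subtracting from such
a `y` the multiple of `g` that cancels one coordinate of `B g` leaves a vector of strictly smaller
support, hence zero; so the kernel is the line through `g`. Conversely, when the kernel is that line
every competitor `y` is a nonzero multiple of `g` and has the same support. Rank–nullity turns
"the kernel is a line" into "the rank is `n - 1`".
-/

section ExtremePoints

variable {𝕜 E : Type*} [Field 𝕜] [LinearOrder 𝕜] [IsStrictOrderedRing 𝕜] [AddCommGroup E]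
  [Module 𝕜 E]

theorem eq_zero_of_add_mem_of_sub_mem_of_mem_extremePoints {S : Set E} {x z : E}
    (hx : x ∈ S.extremePoints 𝕜) (hadd : x + z ∈ S) (hsub : x - z ∈ S) : z = 0 := by
  have : Invertible (2 : 𝕜) := invertibleOfNonzero two_ne_zero
  have hxz : x - z = x :=
    ((mem_extremePoints.1 hx).2 _ hsub _ hadd (mem_openSegment_sub_add x z)).1
  simpa using hxz

end ExtremePoints

theorem PolyAB.eq_zero_of_mulVec_eq_zero_s4 {mA mB n : ℕ} {A : Matrix (Fin mA) (Fin n) ℝ}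
    {b : Fin mA → ℝ} {B : Matrix (Fin mB) (Fin n) ℝ} {d : Fin mB → ℝ}
    (hpointed : ((PolyAB A b B d).extremePoints ℝ).Nonempty) {z : Fin n → ℝ}
    (hA : A *ᵥ z = 0) (hB : B *ᵥ z = 0) : z = 0 := by
  obtain ⟨x, hx⟩ := hpointed
  obtain ⟨hxA, hxB⟩ := hx.1
  refine eq_zero_of_add_mem_of_sub_mem_of_mem_extremePoints hx ⟨?_, fun i ↦ ?_⟩ ⟨?_, fun i ↦ ?_⟩
  all_goals simp_all [mulVec_add, mulVec_sub]

section Kernel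

variable {K m p ι : Type*} [Field K] [Fintype ι]

theorem mem_ker_fromRows_submatrix_iff (A : Matrix m ι K) (B : Matrix p ι K) (g z : ι → K) :
    z ∈ LinearMap.ker
        (fromRows A (B.submatrix (fun i : {i // (B *ᵥ g) i = 0} ↦ (i : p)) id)).mulVecLin ↔
      A *ᵥ z = 0 ∧ Function.support (B *ᵥ z) ⊆ Function.support (B *ᵥ g) := by
  simp only [LinearMap.mem_ker, mulVecLin_apply, fromRows_mulVec, funext_iff, Sum.forall,
    Sum.elim_inl, Sum.elim_inr, Function.support_subset_iff', Function.notMem_support,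
    Subtype.forall, Pi.zero_apply]
  rfl

theorem not_exists_support_ssubset_iff {A : Matrix m ι K} {B : Matrix p ι K} {g : ι → K}
    (hAg : A *ᵥ g = 0) (hBg : B *ᵥ g ≠ 0) :
    (¬ ∃ y, A *ᵥ y = 0 ∧ y ≠ 0 ∧ Function.support (B *ᵥ y) ⊂ Function.support (B *ᵥ g)) ↔
      ∀ y, A *ᵥ y = 0 → Function.support (B *ᵥ y) ⊆ Function.support (B *ᵥ g) → y ∈ K ∙ g := by
  constructor
  · intro hmin y hAy hsupp
    obtain ⟨j, hj⟩ : ∃ j, (B *ᵥ g) j ≠ 0 := Function.ne_iff.1 hBg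
    set c := (B *ᵥ y) j / (B *ᵥ g) j
    have hcancel : (B *ᵥ (y - c • g)) j = 0 := by
      simp [mulVec_sub, mulVec_smul, c, div_mul_cancel₀ _ hj]
    by_contra hy
    refine hmin ⟨y - c • g, by simp [mulVec_sub, mulVec_smul, hAy, hAg], ?_, ?_⟩
    · exact fun h ↦ hy (Submodule.mem_span_singleton.2 ⟨c, (sub_eq_zero.1 h).symm⟩)
    · refine LE.le.ssubset_of_mem_notMem ?_ hj (by simpa using hcancel)
      rw [mulVec_sub, mulVec_smul]
      exact (Function.support_sub _ _).trans
        (Set.union_subset hsupp (Function.support_const_smul_subset _ _))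
  · rintro h ⟨y, hAy, hy, hss⟩
    obtain ⟨c, rfl⟩ := Submodule.mem_span_singleton.1 (h y hAy hss.subset)
    have hc : c ≠ 0 := by rintro rfl; simp at hy
    exact hss.ne (by rw [mulVec_smul, Function.support_const_smul_of_ne_zero _ _ hc])

theorem rank_eq_card_sub_one_iff (M : Matrix m ι K) {g : ι → K} (hg : g ≠ 0)
    (hMg : M *ᵥ g = 0) :
    M.rank = Fintype.card ι - 1 ↔ LinearMap.ker M.mulVecLin ≤ K ∙ g := by
  have hspan : (K ∙ g) ≤ LinearMap.ker M.mulVecLin :=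
    (Submodule.span_singleton_le_iff_mem _ _).2 hMg
  have hline : Module.finrank K (K ∙ g) = 1 := finrank_span_singleton hg
  have hnullity := LinearMap.finrank_range_add_finrank_ker M.mulVecLin
  have hline_le := Submodule.finrank_mono hspan
  rw [Module.finrank_fintype_fun_eq_card] at hnullity
  change M.rank + _ = _ at hnullity
  constructor
  · intro hrank
    exact (Submodule.eq_of_le_of_finrank_le hspan (by omega)).ge
  · intro hle
    rw [le_antisymm hle hspan] at hnullity
    omega

end Kernel

open scoped Classical in
theorem isCircuit_iff_rank_eq
    {mA mB n : ℕ} (A : Matrix (Fin mA) (Fin n) ℝ) (b : Fin mA → ℝ)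
    (B : Matrix (Fin mB) (Fin n) ℝ) (d : Fin mB → ℝ)
    (hpointed : ((PolyAB A b B d).extremePoints ℝ).Nonempty)
    (g : Fin n → ℝ) (hker : A.mulVec g = 0) (hg : g ≠ 0)
    (hcop : IsCoprimeIntegerVec g) :
    IsCircuit A B g ↔
      (Matrix.fromRows A
        (B.submatrix (fun i : {i : Fin mB // B.mulVec g i = 0} => (i : Fin mB)) id)).rank
        = n - 1 := by
  have hBg : B *ᵥ g ≠ 0 := fun h ↦ hg (PolyAB.eq_zero_of_mulVec_eq_zero_s4 hpointed hker h)
  have hrank := rank_eq_card_sub_one_iff _ hg ((mem_ker_fromRows_submatrix_iff A B g g).2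
    ⟨hker, subset_rfl⟩)
  rw [Fintype.card_fin] at hrank
  rw [hrank, SetLike.le_def]
  simp only [mem_ker_fromRows_submatrix_iff, and_imp]
  exact ⟨fun ⟨_, _, _, hmin⟩ ↦ (not_exists_support_ssubset_iff hker hBg).1 hmin,
    fun h ↦ ⟨hker, hg, hcop, (not_exists_support_ssubset_iff hker hBg).2 h⟩⟩
end
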